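/- arXiv:math/9704213 — 11 statements merged into one kernel-verified Lean document; each statement's English description precedes it below -/
import Mathlib

section
/- Let x, y be nonnegative vectors in ℝ^n, and let {1,...,n} be partitioned into disjoint sets I_1,...,I_s. If for each k the restriction x·χ_{I_k} is Hardy–Littlewood majorized by y·χ_{I_k} (i.e., for every m, the sum of the m largest entries of x·χ_{I_k} is at most the sum of the m largest entries of y·χ_{I_k}), then x is Hardy–Littlewood majorized by y. -/
open scoped Classical

/-- Sum of the `m` largest entries of a (nonnegative) vector: the supremum of
sums over index sets of cardinality `m`. -/
noncomputable def sumLargest {ι : Type*} [Fintype ι] (v : ι → ℝ) (m : ℕ) : ℝ :=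
  sSup ((fun I : Finset ι => ∑ i ∈ I, v i) '' {I | I.card = m})

/-- Hardy–Littlewood majorization for vectors: for every `1 ≤ m ≤ card ι`,
the sum of the `m` largest entries of `a` is at most that of `b`. -/
def Maj {ι : Type*} [Fintype ι] (a b : ι → ℝ) : Prop :=
  ∀ m : ℕ, 1 ≤ m → m ≤ Fintype.card ι → sumLargest a m ≤ sumLargest b m

lemma sl_finite {ι : Type*} [Fintype ι] (v : ι → ℝ) (m : ℕ) :
    ((fun I : Finset ι => ∑ i ∈ I, v i) '' {I | I.card = m}).Finite :=
  Set.Finite.image _ (Set.toFinite _)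

lemma le_sumLargest {ι : Type*} [Fintype ι] (v : ι → ℝ) {m : ℕ} {J : Finset ι}
    (hJ : J.card = m) : ∑ i ∈ J, v i ≤ sumLargest v m :=
  le_csSup (sl_finite v m).bddAbove ⟨J, hJ, rfl⟩

lemma sumLargest_mem {ι : Type*} [Fintype ι] (v : ι → ℝ) {m : ℕ}
    (hm : m ≤ Fintype.card ι) :
    ∃ J : Finset ι, J.card = m ∧ sumLargest v m = ∑ i ∈ J, v i := by
  have hne : ((fun I : Finset ι => ∑ i ∈ I, v i) '' {I | I.card = m}).Nonempty := by
    obtain ⟨J, _, _, hJ⟩ := Finset.exists_subsuperset_card_eq (Finset.empty_subset Finset.univ)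
      (by simp) (by simpa using hm)
    exact ⟨_, ⟨J, hJ, rfl⟩⟩
  obtain ⟨J, hJ, hv⟩ := hne.csSup_mem (sl_finite v m)
  exact ⟨J, hJ, hv.symm⟩

lemma sumLargest_zero {ι : Type*} [Fintype ι] (v : ι → ℝ) : sumLargest v 0 = 0 := by
  have : {I : Finset ι | I.card = 0} = {∅} := by
    ext J; simp [Finset.card_eq_zero]
  simp [sumLargest, this]

lemma sum_le_sumLargest {ι : Type*} [Fintype ι] {v : ι → ℝ} (hv : ∀ i, 0 ≤ v i)
    {K : Finset ι} {m : ℕ} (hK : K.card ≤ m) (hm : m ≤ Fintype.card ι) :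
    ∑ i ∈ K, v i ≤ sumLargest v m := by
  obtain ⟨J, hKJ, _, hJ⟩ := Finset.exists_subsuperset_card_eq
    (Finset.subset_univ K) hK (by simpa using hm)
  exact le_trans (Finset.sum_le_sum_of_subset_of_nonneg hKJ fun i _ _ => hv i)
    (le_sumLargest v hJ)

theorem lemma1 (n s : ℕ) (x y : Fin n → ℝ)
    (hx : ∀ k, 0 ≤ x k) (hy : ∀ k, 0 ≤ y k)
    (I : Fin s → Finset (Fin n))
    (hdisj : ∀ j k, j ≠ k → Disjoint (I j) (I k))
    (hcover : Finset.univ.biUnion I = (Finset.univ : Finset (Fin n)))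
    (h : ∀ j : Fin s,
      Maj (fun k => if k ∈ I j then x k else 0) (fun k => if k ∈ I j then y k else 0)) :
    Maj x y := by
  intro m hm1 hmn
  have hcard : Fintype.card (Fin n) = n := Fintype.card_fin n
  obtain ⟨J, hJcard, hJ⟩ := sumLargest_mem x hmn
  rw [hJ]
  -- decompose J
  have hJdec : J = Finset.univ.biUnion (fun j => J ∩ I j) := by
    ext i
    simp only [Finset.mem_biUnion, Finset.mem_inter, Finset.mem_univ, true_and]
    constructor
    · intro hi
      have : i ∈ Finset.univ.biUnion I := by rw [hcover]; exact Finset.mem_univ i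
      obtain ⟨j, _, hj⟩ := Finset.mem_biUnion.mp this
      exact ⟨j, hi, hj⟩
    · rintro ⟨j, hi, _⟩; exact hi
  have hdisj' : ∀ j ∈ Finset.univ, ∀ k ∈ Finset.univ, j ≠ k →
      Disjoint (J ∩ I j) (J ∩ I k) := fun j _ k _ hjk =>
    ((hdisj j k hjk).mono (Finset.inter_subset_right) (Finset.inter_subset_right))
  have hsplit : ∑ i ∈ J, x i = ∑ j : Fin s, ∑ i ∈ J ∩ I j, x i := by
    conv_lhs => rw [hJdec]
    exact Finset.sum_biUnion hdisj'
  set mj : Fin s → ℕ := fun j => (J ∩ I j).card with hmj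
  -- step 1: each piece ≤ sumLargest (xχ) mj
  have step1 : ∀ j : Fin s, ∑ i ∈ J ∩ I j, x i ≤
      sumLargest (fun k => if k ∈ I j then y k else 0) (mj j) := by
    intro j
    have e1 : ∑ i ∈ J ∩ I j, x i =
        ∑ i ∈ J ∩ I j, (if i ∈ I j then x i else 0) := by
      apply Finset.sum_congr rfl
      intro i hi
      rw [if_pos (Finset.mem_inter.mp hi).2]
    have h1 : ∑ i ∈ J ∩ I j, x i ≤
        sumLargest (fun k => if k ∈ I j then x k else 0) (mj j) := by
      rw [e1]; exact le_sumLargest _ rfl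
    rcases Nat.eq_zero_or_pos (mj j) with h0 | hpos
    · rw [h0, sumLargest_zero]
      rw [h0] at h1; rw [sumLargest_zero] at h1
      exact h1
    · have hle : mj j ≤ Fintype.card (Fin n) := by
        rw [hcard]
        exact (Finset.card_le_card Finset.inter_subset_right).trans
          ((Finset.card_le_univ _).trans_eq (by simp))
      exact h1.trans (h j (mj j) hpos hle)
  -- step 2: choose K_j
  have step2 : ∀ j : Fin s, ∃ K : Finset (Fin n), K ⊆ I j ∧ K.card ≤ mj j ∧
      sumLargest (fun k => if k ∈ I j then y k else 0) (mj j) = ∑ i ∈ K, y i := by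
    intro j
    have hle : mj j ≤ Fintype.card (Fin n) :=
      (Finset.card_le_card Finset.inter_subset_left).trans (hJcard.le.trans hmn)
    obtain ⟨L, hLcard, hL⟩ := sumLargest_mem (fun k => if k ∈ I j then y k else 0) hle
    refine ⟨L ∩ I j, Finset.inter_subset_right, hLcard ▸ Finset.card_le_card Finset.inter_subset_left, ?_⟩
    rw [hL, ← Finset.sum_filter, Finset.filter_mem_eq_inter]
  choose K hKsub hKcard hKval using step2
  calc ∑ i ∈ J, x i ≤ ∑ j : Fin s, ∑ i ∈ K j, y i := by
        rw [hsplit]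
        exact Finset.sum_le_sum fun j _ => (step1 j).trans_eq (hKval j)
    _ = ∑ i ∈ Finset.univ.biUnion K, y i := by
        refine (Finset.sum_biUnion ?_).symm
        intro j _ k _ hjk
        exact (hdisj j k hjk).mono (hKsub j) (hKsub k)
    _ ≤ sumLargest y m := by
        apply sum_le_sumLargest hy _ hmn
        calc (Finset.univ.biUnion K).card ≤ ∑ j : Fin s, (K j).card :=
              Finset.card_biUnion_le
          _ ≤ ∑ j : Fin s, mj j := Finset.sum_le_sum fun j _ => hKcard j
          _ = J.card := by
              rw [hmj]
              conv_rhs => rw [hJdec]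
              exact (Finset.card_biUnion hdisj').symm
          _ = m := hJcard
end

section
/- Let u be a nonnegative n×n matrix with u_{11} > 0 and u_{i2} = 0 for all i. Define v by v_{11} = 0, v_{12} = u_{11}, and v_{ij} = u_{ij} otherwise. Then the vector Tu = (Σ_{k=1}^n u_{k,π(k)} : π ∈ S_n) ∈ ℝ^{n!} is Hardy–Littlewood majorized by Tv. -/
open scoped Classical

/-- The vector `Tx = (∑ k, x_{k, π k})_{π ∈ S_n}`. -/
def T (n : ℕ) (x : Fin n → Fin n → ℝ) : Equiv.Perm (Fin n) → ℝ :=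
  fun π => ∑ k, x k (π k)

theorem maj_of_involution {ι : Type*} [Fintype ι] (a b : ι → ℝ) (s : ι → ι)
    (hs : ∀ x, s (s x) = x)
    (hpair : ∀ x, a x + a (s x) ≤ b x + b (s x))
    (hmax : ∀ x, a x ≤ max (b x) (b (s x))) : Maj a b := by
  have hsinj : Function.Injective s := Function.LeftInverse.injective hs
  intro m hm1 hm2
  unfold sumLargest
  -- nonempty
  obtain ⟨I0, -, hI0⟩ := Finset.exists_subset_card_eq (by simpa using hm2 :
    m ≤ (Finset.univ : Finset ι).card)
  have hbdd : BddAbove ((fun I : Finset ι => ∑ i ∈ I, b i) '' {I | I.card = m}) :=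
    (Set.toFinite _).bddAbove
  have hne : ((fun I : Finset ι => ∑ i ∈ I, a i) '' {I | I.card = m}).Nonempty :=
    ⟨_, ⟨I0, hI0, rfl⟩⟩
  apply csSup_le hne
  rintro x ⟨I, hI, rfl⟩
  -- define the injection
  set φ : ι → ι := fun x => if s x ∈ I then x else if a x ≤ b x then x else s x with hφ
  have hφinj : Set.InjOn φ I := by
    intro x hx y hy hxy
    simp only [hφ] at hxy
    split_ifs at hxy with h1 h2 h3 h4 h5 h6 <;>
      first
        | exact hxy
        | exact hsinj hxy
        | (exfalso; subst hxy; simp_all [hs])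
  have hcard : (I.image φ).card = m := by
    rw [Finset.card_image_of_injOn hφinj, hI]
  have hsum : ∑ i ∈ I, a i ≤ ∑ i ∈ I.image φ, b i := by
    rw [Finset.sum_image (fun x hx y hy h => hφinj hx hy h)]
    -- split into paired part and unpaired part
    rw [← Finset.sum_filter_add_sum_filter_not I (fun x => s x ∈ I) a,
        ← Finset.sum_filter_add_sum_filter_not I (fun x => s x ∈ I) (fun x => b (φ x))]
    have h1 : ∑ x ∈ I.filter (fun x => s x ∈ I), a x
        ≤ ∑ x ∈ I.filter (fun x => s x ∈ I), b (φ x) := by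
      set I1 := I.filter (fun x => s x ∈ I) with hI1
      have hmem : ∀ x ∈ I1, s x ∈ I1 := by
        intro x hx
        simp only [hI1, Finset.mem_filter] at hx ⊢
        exact ⟨hx.2, by rw [hs]; exact hx.1⟩
      have himg : I1.image s = I1 := by
        apply Finset.eq_of_subset_of_card_le
        · intro y hy
          obtain ⟨x, hx, rfl⟩ := Finset.mem_image.mp hy
          exact hmem x hx
        · rw [Finset.card_image_of_injective _ hsinj]
      have hcomp : ∀ f : ι → ℝ, ∑ x ∈ I1, f (s x) = ∑ x ∈ I1, f x := by
        intro f
        conv_rhs => rw [← himg]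
        rw [Finset.sum_image (fun x _ y _ h => hsinj h)]
      have hφ1 : ∀ x ∈ I1, b (φ x) = b x := by
        intro x hx
        simp only [hI1, Finset.mem_filter] at hx
        simp only [hφ, if_pos hx.2]
      rw [Finset.sum_congr rfl hφ1]
      have key : ∑ x ∈ I1, (a x + a (s x)) ≤ ∑ x ∈ I1, (b x + b (s x)) :=
        Finset.sum_le_sum fun x _ => hpair x
      rw [Finset.sum_add_distrib, Finset.sum_add_distrib, hcomp a, hcomp b] at key
      linarith
    have h2 : ∑ x ∈ I.filter (fun x => ¬ s x ∈ I), a x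
        ≤ ∑ x ∈ I.filter (fun x => ¬ s x ∈ I), b (φ x) := by
      apply Finset.sum_le_sum
      intro x hx
      simp only [Finset.mem_filter] at hx
      simp only [hφ, if_neg hx.2]
      by_cases hab : a x ≤ b x
      · rw [if_pos hab]; exact hab
      · rw [if_neg hab]
        rcases max_cases (b x) (b (s x)) with ⟨h, _⟩ | ⟨h, _⟩
        · linarith [hmax x]
        · linarith [hmax x]
    linarith
  calc ∑ i ∈ I, a i ≤ ∑ i ∈ I.image φ, b i := hsum
    _ ≤ _ := le_csSup hbdd ⟨I.image φ, hcard, rfl⟩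

theorem lemma2 (n : ℕ) (hn : 2 ≤ n) (u v : Fin n → Fin n → ℝ)
    (hu : ∀ i j, 0 ≤ u i j)
    (h11 : 0 < u ⟨0, by omega⟩ ⟨0, by omega⟩)
    (hcol2 : ∀ i, u i ⟨1, by omega⟩ = 0)
    (hv : ∀ i j : Fin n, v i j =
      if (i : ℕ) = 0 ∧ (j : ℕ) = 0 then 0
      else if (i : ℕ) = 0 ∧ (j : ℕ) = 1 then u ⟨0, by omega⟩ ⟨0, by omega⟩
      else u i j) :
    Maj (T n u) (T n v) := by
  set i0 : Fin n := ⟨0, by omega⟩ with hi0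
  set i1 : Fin n := ⟨1, by omega⟩ with hi1
  have hne01 : i0 ≠ i1 := by simp [hi0, hi1, Fin.ext_iff]
  set sw : Equiv.Perm (Fin n) := Equiv.swap i0 i1 with hsw
  -- basic facts about v
  have hveq : ∀ k j : Fin n, j ≠ i0 → j ≠ i1 → v k j = u k j := by
    intro k j h0 h1
    rw [hv]
    rw [if_neg, if_neg]
    · rintro ⟨-, hj⟩; exact h1 (Fin.ext hj)
    · rintro ⟨-, hj⟩; exact h0 (Fin.ext hj)
  have hveq2 : ∀ k j : Fin n, k ≠ i0 → v k j = u k j := by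
    intro k j h0
    rw [hv]
    rw [if_neg, if_neg]
    · rintro ⟨hk, -⟩; exact h0 (Fin.ext hk)
    · rintro ⟨hk, -⟩; exact h0 (Fin.ext hk)
  have hv00 : v i0 i0 = 0 := by rw [hv]; simp [hi0]
  have hv01 : v i0 i1 = u i0 i0 := by
    rw [hv]; simp [hi0, hi1]
  apply maj_of_involution (T n u) (T n v) (fun π => sw * π)
  · intro π
    show sw * (sw * π) = π
    rw [← mul_assoc, hsw, Equiv.swap_mul_self, one_mul]
  · -- pair sums are equal
    intro π
    simp only [T, Equiv.Perm.mul_apply]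
    rw [← Finset.sum_add_distrib, ← Finset.sum_add_distrib]
    apply le_of_eq
    apply Finset.sum_congr rfl
    intro k _
    by_cases h0 : π k = i0
    · rw [h0, hsw, Equiv.swap_apply_left]
      by_cases hk : k = i0
      · rw [hk, hv00, hv01, hcol2]
        ring
      · rw [hveq2 k i0 hk, hveq2 k i1 hk]
    · by_cases h1 : π k = i1
      · rw [h1, hsw, Equiv.swap_apply_right]
        by_cases hk : k = i0
        · rw [hk, hv00, hv01, hcol2]
          ring
        · rw [hveq2 k i0 hk, hveq2 k i1 hk]
      · rw [hsw, Equiv.swap_apply_of_ne_of_ne h0 h1, hveq k (π k) h0 h1]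
  · -- max bound
    intro π
    by_cases hπ : π i0 = i0
    · refine le_trans ?_ (le_max_right _ _)
      simp only [T, Equiv.Perm.mul_apply]
      apply Finset.sum_le_sum
      intro k _
      by_cases hk : k = i0
      · subst hk
        rw [hπ, hsw, Equiv.swap_apply_left, hv01]
      · have hpk0 : π k ≠ i0 := fun h => hk (π.injective (h.trans hπ.symm))
        by_cases hpk1 : π k = i1
        · rw [hpk1, hsw, Equiv.swap_apply_right, hveq2 k i0 hk, hcol2]
          exact hu k i0
        · rw [hsw, Equiv.swap_apply_of_ne_of_ne hpk0 hpk1,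
            hveq k (π k) hpk0 hpk1]
    · refine le_trans ?_ (le_max_left _ _)
      simp only [T]
      apply Finset.sum_le_sum
      intro k _
      by_cases hk : k = i0
      · subst hk
        by_cases hpk1 : π i0 = i1
        · rw [hpk1, hv01, hcol2]
          exact h11.le
        · rw [hveq i0 (π i0) hπ hpk1]
      · rw [hveq2 k (π k) hk]
end

section
/- Let x be an n×n matrix with entries in {0,1} having exactly n entries equal to 1. Then the vector Tx = (Σ_{k=1}^n x_{k,π(k)} : π ∈ S_n) is Hardy–Littlewood majorized by T(I_n), where I_n is the identity matrix. -/
open scoped Classical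

/-!
Let `E` be the support of `x`, so that `(T x) π` counts the cells of `E` on the graph of `π`.
Moving a `1` from a row with two `1`s into an empty row `i₀` (same column) can only increase the
sums of the `m` largest entries: right multiplication by the transposition `(i i₀)` is an
involution of `Sₙ` pairing the entries of the old and new vectors with equal pair sums, and each
old entry is dominated by one of the two new entries of its pair. Doing this for rows, and for
columns after transposing, turns `E` into the graph of a permutation `σ`, whose vector is
`T(Iₙ)` reindexed by `π ↦ σ⁻¹ π`.
-/

open Finset

section sumLargest

variable {ι κ : Type*} [Fintype ι] [Fintype κ]

theorem sum_le_sumLargest_s2 (v : ι → ℝ) {I : Finset ι} {m : ℕ} (hI : I.card = m) :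
    ∑ i ∈ I, v i ≤ sumLargest v m :=
  le_csSup ((Set.toFinite _).image _).bddAbove ⟨I, hI, rfl⟩

theorem sumLargest_le (v : ι → ℝ) {m : ℕ} (hm : m ≤ Fintype.card ι) {c : ℝ}
    (h : ∀ I : Finset ι, I.card = m → ∑ i ∈ I, v i ≤ c) : sumLargest v m ≤ c := by
  obtain ⟨I, -, hI⟩ := exists_subset_card_eq (s := (univ : Finset ι)) (by simpa using hm)
  exact csSup_le ⟨_, I, hI, rfl⟩ (by rintro _ ⟨I, hI, rfl⟩; exact h I hI)

theorem sumLargest_comp_equiv (v : ι → ℝ) (e : κ ≃ ι) (m : ℕ) :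
    sumLargest (v ∘ e) m = sumLargest v m := by
  refine congrArg sSup (Set.ext fun s => ⟨?_, ?_⟩)
  · rintro ⟨I, hI, rfl⟩
    exact ⟨I.map e.toEmbedding, by simpa using hI, by simp⟩
  · rintro ⟨I, hI, rfl⟩
    exact ⟨I.map e.symm.toEmbedding, by simpa using hI, by simp⟩

theorem sumLargest_le_of_involutive {a b : ι → ℝ} {e : ι → ι} (he : Function.Involutive e)
    (hsum : ∀ i, a i + a (e i) = b i + b (e i)) (hle : ∀ i, a i ≤ b i ∨ a i ≤ b (e i))
    {m : ℕ} (hm : m ≤ Fintype.card ι) : sumLargest a m ≤ sumLargest b m := by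
  refine sumLargest_le a hm fun S hS => ?_
  -- a pair `{i, e i} ⊆ S` has the same `a`- and `b`-sum; a lone `i ∈ S` moves to the better
  -- of `i` and `e i`, which is free since `e i ∉ S`
  let g i := if e i ∉ S ∧ ¬ a i ≤ b i then e i else i
  have hg : Set.InjOn g S := by
    intro i hi k hk hik
    simp only [g] at hik
    split_ifs at hik with h1 h2 h2
    · exact he.injective hik
    · exact absurd (hik ▸ hk) h1.1
    · exact absurd (hik ▸ hi) h2.1
    · exact hik
  have hpairs : ∑ i ∈ S with e i ∈ S, a i = ∑ i ∈ S with e i ∈ S, b (g i) := by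
    have hD : ∀ i ∈ S.filter (e · ∈ S), e i ∈ S.filter (e · ∈ S) := by
      intro i hi
      simp_all [he i]
    have hflip (f : ι → ℝ) : ∑ i ∈ S with e i ∈ S, f (e i) = ∑ i ∈ S with e i ∈ S, f i :=
      sum_nbij' e e hD hD (fun i _ => he i) (fun i _ => he i) fun _ _ => rfl
    have hpair_sums := sum_congr (s₁ := S.filter (e · ∈ S)) rfl fun i _ => hsum i
    rw [sum_add_distrib, sum_add_distrib, hflip, hflip] at hpair_sums
    rw [sum_congr rfl fun i hi => congrArg b (if_neg fun h => h.1 (mem_filter.1 hi).2)]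
    linarith
  have hlone : ∑ i ∈ S with e i ∉ S, a i ≤ ∑ i ∈ S with e i ∉ S, b (g i) := by
    refine sum_le_sum fun i hi => ?_
    have hi : e i ∉ S := (mem_filter.1 hi).2
    by_cases hab : a i ≤ b i
    · simp only [g, hab, not_true, and_false, if_false]
    · simpa only [g, hi, hab, not_false_eq_true, and_self, if_true] using (hle i).resolve_left hab
  calc ∑ i ∈ S, a i
      = ∑ i ∈ S with e i ∈ S, a i + ∑ i ∈ S with e i ∉ S, a i :=
        (sum_filter_add_sum_filter_not _ _ _).symm
    _ ≤ ∑ i ∈ S, b (g i) := by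
        rw [← sum_filter_add_sum_filter_not S (e · ∈ S)]
        linarith
    _ = ∑ i ∈ S.image g, b i := (sum_image hg).symm
    _ ≤ sumLargest b m := sum_le_sumLargest_s2 b (by rw [card_image_of_injOn hg, hS])

end sumLargest

section hitCount

variable {α : Type*} [DecidableEq α]

noncomputable def hitCount (E : Finset (α × α)) (π : Equiv.Perm α) : ℝ :=
  ∑ p ∈ E, if π p.1 = p.2 then 1 else 0

theorem hitCount_insert {E : Finset (α × α)} {p : α × α} (hp : p ∉ E) (π : Equiv.Perm α) :
    hitCount (insert p E) π = hitCount E π + if π p.1 = p.2 then 1 else 0 := by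
  rw [hitCount, sum_insert hp, add_comm, hitCount]

theorem hitCount_image_swap (E : Finset (α × α)) :
    hitCount (E.image Prod.swap) = hitCount E ∘ Equiv.inv (Equiv.Perm α) := by
  funext π
  rw [Function.comp_apply, hitCount, hitCount,
    sum_image fun _ _ _ _ => Prod.swap_injective.eq_iff.1]
  refine sum_congr rfl fun p _ => ?_
  simp only [Prod.fst_swap, Prod.snd_swap, Equiv.inv_apply, Equiv.Perm.eq_inv_iff_eq, eq_comm]

theorem hitCount_graph [Fintype α] (σ : Equiv.Perm α) :
    hitCount (univ.image fun i => (i, σ i)) =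
      hitCount (univ.image fun i => (i, i)) ∘ Equiv.mulLeft σ⁻¹ := by
  funext π
  simp only [Function.comp_apply, Equiv.coe_mulLeft, hitCount, Equiv.Perm.mul_apply,
    sum_image fun _ _ _ _ h => (Prod.mk.inj h).1, Equiv.Perm.inv_eq_iff_eq]

end hitCount

section moves

variable {α : Type*} [Fintype α] [DecidableEq α] {m : ℕ}

theorem sumLargest_hitCount_le_move_to_empty_row {E : Finset (α × α)} {i i₀ j : α}
    (hij : (i, j) ∈ E) (hi₀ : ∀ p ∈ E, p.1 ≠ i₀) (hm : m ≤ Fintype.card (Equiv.Perm α)) :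
    sumLargest (hitCount E) m ≤ sumLargest (hitCount (insert (i₀, j) (E.erase (i, j)))) m := by
  set F := E.erase (i, j)
  have hijF : (i, j) ∉ F := notMem_erase _ _
  have hi₀F : (i₀, j) ∉ F := fun h => hi₀ _ (mem_of_mem_erase h) rfl
  have hE (π : Equiv.Perm α) : hitCount E π = hitCount F π + if π i = j then 1 else 0 := by
    rw [← hitCount_insert hijF, insert_erase hij]
  have hE' (π : Equiv.Perm α) := hitCount_insert hi₀F π
  let τ := Equiv.swap i i₀
  have hτi (π : Equiv.Perm α) : (π * τ) i = π i₀ := by simp [τ]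
  have hτi₀ (π : Equiv.Perm α) : (π * τ) i₀ = π i := by simp [τ]
  refine sumLargest_le_of_involutive (e := (· * τ)) (fun π => by simp [τ, mul_assoc])
    (fun π => ?_) (fun π => ?_) hm
  · simp only [hE, hE', hτi, hτi₀]
    ring
  by_cases hπ : π i = j
  · right
    -- the hits of `π` in `F` avoid rows `i` (as `(i, j) ∉ F`) and `i₀` (empty): `τ` keeps them
    have hF : hitCount F π ≤ hitCount F (π * τ) := sum_le_sum fun p hp => by
      have hp₀ : p.1 ≠ i₀ := hi₀ p (mem_of_mem_erase hp)
      by_cases hpπ : π p.1 = p.2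
      · have hp₁ : p.1 ≠ i := fun h => hijF (by rwa [← h, ← hπ, ← h, hpπ])
        simp [hpπ, Equiv.swap_apply_of_ne_of_ne hp₁ hp₀, τ]
      · simp only [hpπ, if_false]
        positivity
    simp only [hE, hE', hτi₀, if_pos hπ]
    linarith
  · left
    have : (0 : ℝ) ≤ if π i₀ = j then 1 else 0 := by positivity
    simp only [hE, hE', if_neg hπ]
    linarith

theorem exists_perm_eq_graph {E : Finset (α × α)} (hE : E.card = Fintype.card α)
    (hfst : (E.image Prod.fst).card = E.card) (hsnd : (E.image Prod.snd).card = E.card) :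
    ∃ σ : Equiv.Perm α, E = univ.image fun i => (i, σ i) := by
  have hbij (f : α × α → α) (hf : (E.image f).card = E.card) :
      Function.Bijective fun p : E => f p :=
    (Fintype.bijective_iff_injective_and_card _).2
      ⟨fun p q h => Subtype.ext (card_image_iff.1 hf p.2 q.2 h), by simp [hE]⟩
  let e₁ := Equiv.ofBijective _ (hbij Prod.fst hfst)
  let e₂ := Equiv.ofBijective _ (hbij Prod.snd hsnd)
  refine ⟨e₁.symm.trans e₂, ext fun q => ⟨fun hq => ?_, ?_⟩⟩
  · have : e₁.symm q.1 = ⟨q, hq⟩ := e₁.symm_apply_eq.2 rfl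
    exact mem_image.2 ⟨q.1, mem_univ _, by rw [Equiv.trans_apply, this]; rfl⟩
  · intro hq
    obtain ⟨i, -, rfl⟩ := mem_image.1 hq
    convert (e₁.symm i).2 using 1
    exact Prod.ext (e₁.apply_symm_apply i).symm rfl

theorem exists_move_to_empty_row {E : Finset (α × α)} (hE : E.card = Fintype.card α)
    (hrow : (E.image Prod.fst).card < Fintype.card α) (hm : m ≤ Fintype.card (Equiv.Perm α)) :
    ∃ E' : Finset (α × α), E'.card = E.card ∧
      (E.image Prod.fst).card < (E'.image Prod.fst).card ∧ E'.image Prod.snd = E.image Prod.snd ∧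
      sumLargest (hitCount E) m ≤ sumLargest (hitCount E') m := by
  obtain ⟨⟨i, j⟩, hp, q, hq, hpq, hiq⟩ := exists_ne_map_eq_of_card_image_lt (hrow.trans_eq hE.symm)
  obtain ⟨i₀, -, hi₀⟩ := exists_mem_notMem_of_card_lt_card (hrow.trans_eq card_univ.symm)
  have hi₀E : ∀ r ∈ E, r.1 ≠ i₀ := fun r hr h => hi₀ (h ▸ mem_image_of_mem _ hr)
  have hnew : (i₀, j) ∉ E.erase (i, j) := fun h => hi₀E _ (mem_of_mem_erase h) rfl
  have hrows : (E.erase (i, j)).image Prod.fst = E.image Prod.fst := by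
    conv_rhs => rw [← insert_erase hp, image_insert]
    exact (insert_eq_of_mem (mem_image.2 ⟨q, mem_erase.2 ⟨hpq.symm, hq⟩, hiq.symm⟩)).symm
  refine ⟨insert (i₀, j) (E.erase (i, j)), ?_, ?_, ?_,
    sumLargest_hitCount_le_move_to_empty_row hp hi₀E hm⟩
  · rw [card_insert_of_notMem hnew, card_erase_add_one hp]
  · rw [image_insert, hrows, card_insert_of_notMem hi₀]
    exact Nat.lt_succ_self _
  · conv_rhs => rw [← insert_erase hp]
    rw [image_insert, image_insert]

theorem sumLargest_hitCount_le_diagonal (hm : m ≤ Fintype.card (Equiv.Perm α))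
    (E : Finset (α × α)) (hE : E.card = Fintype.card α) :
    sumLargest (hitCount E) m ≤ sumLargest (hitCount (univ.image fun i : α => (i, i))) m := by
  induction hd : (Fintype.card α - (E.image Prod.fst).card) +
      (Fintype.card α - (E.image Prod.snd).card) using Nat.strong_induction_on generalizing E with
  | _ d ih =>
  have hfst := card_le_univ (E.image Prod.fst)
  have hsnd := card_le_univ (E.image Prod.snd)
  by_cases hrow : (E.image Prod.fst).card < Fintype.card α
  · obtain ⟨E', hcard, hlt, hcol, hle⟩ := exists_move_to_empty_row hE hrow hm
    have := card_le_univ (E'.image Prod.fst)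
    exact hle.trans (ih _ (by rw [hcol]; omega) E' (hcard.trans hE) rfl)
  by_cases hcol : (E.image Prod.snd).card < Fintype.card α
  · have hcard : (E.image Prod.swap).card = Fintype.card α := by
      rw [card_image_of_injective _ Prod.swap_injective, hE]
    have hrow' : (E.image Prod.swap).image Prod.fst = E.image Prod.snd := by
      rw [image_image]; rfl
    have hcol' : (E.image Prod.swap).image Prod.snd = E.image Prod.fst := by
      rw [image_image]; rfl
    obtain ⟨E', hcard', hlt, hcol'', hle⟩ := exists_move_to_empty_row hcard (hrow' ▸ hcol) hm
    have := card_le_univ (E'.image Prod.fst)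
    calc sumLargest (hitCount E) m = sumLargest (hitCount (E.image Prod.swap)) m := by
          rw [hitCount_image_swap, sumLargest_comp_equiv]
      _ ≤ sumLargest (hitCount E') m := hle
      _ ≤ _ := ih _ (by rw [hrow'] at hlt; rw [hcol'', hcol']; omega) E'
          (hcard'.trans hcard) rfl
  obtain ⟨σ, rfl⟩ := exists_perm_eq_graph hE (by omega) (by omega)
  rw [hitCount_graph, sumLargest_comp_equiv]

end moves

theorem T_eq_hitCount {n : ℕ} {x : Fin n → Fin n → ℝ} {E : Finset (Fin n × Fin n)}
    (hx : ∀ i j, x i j = if (i, j) ∈ E then 1 else 0) : T n x = hitCount E := by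
  funext π
  simp only [T, hitCount, hx, sum_boole]
  congr 1
  refine card_nbij' (fun k => (k, π k)) Prod.fst (fun k hk => ?_) (fun p hp => ?_)
    (fun k _ => rfl) fun p hp => Prod.ext rfl (mem_filter.1 hp).2
  all_goals simp_all

theorem lemma3 (n : ℕ) (x : Fin n → Fin n → ℝ)
    (h01 : ∀ i j, x i j = 0 ∨ x i j = 1)
    (hcard : (Finset.univ.filter (fun p : Fin n × Fin n => x p.1 p.2 = 1)).card = n) :
    Maj (T n x) (T n (fun i j => if i = j then (1 : ℝ) else 0)) := by
  intro m _ hm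
  rw [T_eq_hitCount (E := univ.filter fun p : Fin n × Fin n => x p.1 p.2 = 1) fun i j => by
      rcases h01 i j with h | h <;> simp [h],
    T_eq_hitCount (E := univ.image fun i => (i, i)) fun i j => by simp]
  exact sumLargest_hitCount_le_diagonal hm _ (by simpa using hcard)
end

section
/- Let f ∈ L¹[0,1] be nonnegative, let 0 < α < 1 and C > 1. Then the following are equivalent: (a) for every nonnegative x ∈ L¹[0,1] with x ≺ f, we have x^α ≺ C·f^α; (b) for every τ ∈ (0,1], τ^{1-α}·(∫_0^τ f*(t) dt)^α ≤ C·∫_0^τ (f*(t))^α dt. -/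
/-!
For `x ≥ 0` one has `(x ^ α)* = (x*) ^ α`, so both conditions only involve rearrangements.

(b) ⇒ (a): Jensen's inequality for the concave map `r ↦ r ^ α` gives
`∫₀^σ (x*)^α ≤ σ^(1-α) (∫₀^σ x*)^α`; majorization `x ≺ f` and (b) at `σ` finish the estimate.

(a) ⇒ (b): test (a) on the step function `x = c · 1_(0,τ]`, where `c` is the mean of `f*` on
`(0,τ]`. Then `x* = c` on `[0,τ)` and `x* = 0` on `[τ,∞)`; `x ≺ f` because the means of the
decreasing function `f*` over `(0,σ]` decrease in `σ`, and (a) at `τ` is exactly (b) at `τ`.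
-/

open MeasureTheory

/-- Decreasing rearrangement on `[0,1]` of a function `f : [0,1] → ℝ`. -/
noncomputable def decRear (f : ℝ → ℝ) (t : ℝ) : ℝ :=
  sInf {s : ℝ | 0 ≤ s ∧ (volume {u : ℝ | u ∈ Set.Icc (0:ℝ) 1 ∧ s < |f u|}).toReal ≤ t}

/-- `x ≺ C·f` : Hardy–Littlewood majorization (with constant `C`) on `[0,1]`. -/
def HLMaj (x f : ℝ → ℝ) (C : ℝ) : Prop :=
  ∀ τ ∈ Set.Icc (0:ℝ) 1,
    ∫ t in (0:ℝ)..τ, decRear x t ≤ C * ∫ t in (0:ℝ)..τ, decRear f t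

open Set

noncomputable def decRearrangement {X : Type*} [MeasurableSpace X] (μ : Measure X) (g : X → ℝ)
    (t : ℝ) : ℝ :=
  sInf {s : ℝ | 0 ≤ s ∧ μ.real {u | s < |g u|} ≤ t}

lemma decRear_eq_decRearrangement (g : ℝ → ℝ) :
    decRear g = decRearrangement (volume.restrict (Icc 0 1)) g := by
  ext t
  simp only [decRear, decRearrangement, measureReal_def, Measure.restrict_apply' measurableSet_Icc,
    inter_comm]
  rfl

section Rearrangement

variable {X : Type*} [MeasurableSpace X] {μ : Measure X} {g : X → ℝ} {s t : ℝ}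

lemma decRearrangement_nonneg : 0 ≤ decRearrangement μ g t :=
  Real.sInf_nonneg fun _ hs => hs.1

lemma decRearrangement_le (hs : 0 ≤ s) (h : μ.real {u | s < |g u|} ≤ t) :
    decRearrangement μ g t ≤ s :=
  csInf_le ⟨0, fun _ hs => hs.1⟩ ⟨hs, h⟩

lemma exists_measureReal_lt_abs_le [IsFiniteMeasure μ] (hg : Integrable g μ) (ht : 0 < t) :
    ∃ s, 0 ≤ s ∧ μ.real {u | s < |g u|} ≤ t := by
  set I := ∫ u, |g u| ∂μ
  set s := I / t + 1
  have hs : 0 < s := by positivity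
  refine ⟨s, hs.le, ?_⟩
  have markov : s * μ.real {u | s ≤ |g u|} ≤ I :=
    mul_meas_ge_le_integral_of_nonneg (ae_of_all _ fun u => abs_nonneg (g u)) hg.abs s
  have hsub : μ.real {u | s < |g u|} ≤ μ.real {u | s ≤ |g u|} :=
    measureReal_mono (ofPred_subset_ofPred.mpr fun _ hu => hu.le)
  by_contra! h
  have hst : s * t = I + t := by rw [add_mul, div_mul_cancel₀ _ ht.ne', one_mul]
  linarith [mul_lt_mul_of_pos_left h hs, mul_le_mul_of_nonneg_left hsub hs.le]

lemma decRearrangement_antitoneOn [IsFiniteMeasure μ] (hg : Integrable g μ) :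
    AntitoneOn (decRearrangement μ g) (Ioi 0) := fun _ ht _ _ hle =>
  csInf_le_csInf ⟨0, fun _ hs => hs.1⟩ (exists_measureReal_lt_abs_le hg ht)
    fun _ hs => ⟨hs.1, hs.2.trans hle⟩

lemma lintegral_decRearrangement_le [IsFiniteMeasure μ] (hg : Integrable g μ) :
    ∫⁻ t in Ioi 0, ENNReal.ofReal (decRearrangement μ g t) ≤ ∫⁻ u, ENNReal.ofReal |g u| ∂μ := by
  rw [lintegral_eq_lintegral_meas_lt _ (ae_of_all _ fun _ => decRearrangement_nonneg)
      (aemeasurable_restrict_of_antitoneOn measurableSet_Ioi (decRearrangement_antitoneOn hg)),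
    lintegral_eq_lintegral_meas_lt _ (ae_of_all _ fun u => abs_nonneg (g u)) hg.abs.aemeasurable]
  refine setLIntegral_mono' measurableSet_Ioi fun s hs => ?_
  have hsub : {t | s < decRearrangement μ g t} ∩ Ioi 0 ⊆ Ioo 0 (μ.real {u | s < |g u|}) :=
    fun t ⟨hlt, ht⟩ =>
      ⟨ht, lt_of_not_ge fun hle => (decRearrangement_le (le_of_lt hs) hle).not_gt hlt⟩
  calc volume.restrict (Ioi 0) {t | s < decRearrangement μ g t}
      = volume ({t | s < decRearrangement μ g t} ∩ Ioi 0) :=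
        Measure.restrict_apply' measurableSet_Ioi
    _ ≤ volume (Ioo 0 (μ.real {u | s < |g u|})) := measure_mono hsub
    _ = μ {u | s < |g u|} := by
        rw [Real.volume_Ioo, sub_zero, measureReal_def, ENNReal.ofReal_toReal (measure_ne_top _ _)]

lemma integrableOn_decRearrangement [IsFiniteMeasure μ] (hg : Integrable g μ) :
    IntegrableOn (decRearrangement μ g) (Ioi 0) := by
  refine ⟨(aemeasurable_restrict_of_antitoneOn measurableSet_Ioi
    (decRearrangement_antitoneOn hg)).aestronglyMeasurable, ?_⟩
  rw [hasFiniteIntegral_iff_ofReal (ae_of_all _ fun _ => decRearrangement_nonneg)]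
  refine (lintegral_decRearrangement_le hg).trans_lt ?_
  exact (hasFiniteIntegral_iff_ofReal (ae_of_all _ fun u => abs_nonneg (g u))).mp hg.abs.2

lemma decRearrangement_rpow (hg : ∀ u, 0 ≤ g u) {α : ℝ} (hα : 0 < α) (t : ℝ) :
    decRearrangement μ (fun u => g u ^ α) t = decRearrangement μ g t ^ α := by
  set S := {s : ℝ | 0 ≤ s ∧ μ.real {u | s < |g u|} ≤ t}
  have level_set : ∀ s, 0 ≤ s → {u | s ^ α < |g u ^ α|} = {u | s < |g u|} := fun s hs => by
    ext u
    simp only [mem_ofPred_eq, abs_of_nonneg (hg u), abs_of_nonneg (Real.rpow_nonneg (hg u) α),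
      Real.rpow_lt_rpow_iff hs (hg u) hα]
  have himage : {s : ℝ | 0 ≤ s ∧ μ.real {u | s < |g u ^ α|} ≤ t} = (· ^ α) '' S := by
    ext s
    refine ⟨fun ⟨hs, hle⟩ => ⟨s ^ α⁻¹, ⟨Real.rpow_nonneg hs _, ?_⟩, Real.rpow_inv_rpow hs hα.ne'⟩,
      fun ⟨r, ⟨hr, hle⟩, hrs⟩ => hrs ▸ ⟨Real.rpow_nonneg hr α, by rwa [level_set r hr]⟩⟩
    rwa [← level_set _ (Real.rpow_nonneg hs _), Real.rpow_inv_rpow hs hα.ne']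
  change sInf _ = sInf S ^ α
  rw [himage]
  rcases S.eq_empty_or_nonempty with hS | hS
  · rw [hS, image_empty, Real.sInf_empty, Real.zero_rpow hα.ne']
  have hmono : MonotoneOn (· ^ α) S :=
    (Real.monotoneOn_rpow_Ici_of_exponent_nonneg hα.le).mono fun _ hs => hs.1
  exact (hmono.map_csInf_of_continuousWithinAt
    (Real.continuous_rpow_const hα.le).continuousWithinAt hS ⟨0, fun _ hs => hs.1⟩).symm

lemma decRearrangement_indicator_of_lt [IsFiniteMeasure μ] {A : Set X} {c : ℝ} (hc : 0 ≤ c)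
    (ht₀ : 0 ≤ t) (ht : t < μ.real A) : decRearrangement μ (A.indicator fun _ => c) t = c := by
  have habs : ∀ u, |A.indicator (fun _ => c) u| = A.indicator (fun _ => c) u := fun u =>
    abs_of_nonneg (indicator_nonneg (fun _ _ => hc) u)
  have hc_mem : c ∈ {s | 0 ≤ s ∧ μ.real {u | s < |A.indicator (fun _ => c) u|} ≤ t} := by
    have hempty : {u | c < |A.indicator (fun _ => c) u|} = ∅ :=
      eq_empty_of_forall_notMem fun u (hu : c < _) =>
        (habs u ▸ hu).not_ge (indicator_apply_le' (fun _ => le_rfl) fun _ => hc)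
    exact ⟨hc, by rwa [hempty, measureReal_empty]⟩
  refine le_antisymm (csInf_le ⟨0, fun _ hs => hs.1⟩ hc_mem)
    (le_csInf ⟨c, hc_mem⟩ fun s ⟨hs, hst⟩ => not_lt.mp fun hsc => ht.not_ge (le_trans ?_ hst))
  exact measureReal_mono fun u hu => by simpa [habs, indicator_of_mem hu] using hsc

lemma decRearrangement_indicator_of_le [IsFiniteMeasure μ] {A : Set X} {c : ℝ}
    (ht : μ.real A ≤ t) : decRearrangement μ (A.indicator fun _ => c) t = 0 :=
  le_antisymm (decRearrangement_le le_rfl (le_trans (measureReal_mono fun u hu =>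
    (by simpa using hu : u ∈ A ∧ c ≠ 0).1) ht)) decRearrangement_nonneg

end Rearrangement

section PowerMean

variable {X : Type*} [MeasurableSpace X] {μ : Measure X} [IsFiniteMeasure μ] {g : X → ℝ} {α : ℝ}

lemma MeasureTheory.Integrable.norm_rpow_of_le_one (hg : Integrable g μ) (hα₀ : 0 ≤ α)
    (hα₁ : α ≤ 1) : Integrable (fun u => ‖g u‖ ^ α) μ := by
  have h := (memLp_one_iff_integrable.mpr hg).norm_rpow_div (ENNReal.ofReal α)
  rw [ENNReal.toReal_ofReal hα₀] at h
  refine memLp_one_iff_integrable.mp (h.mono_exponent ?_)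
  rw [one_div]
  exact ENNReal.one_le_inv.mpr (ENNReal.ofReal_le_one.mpr hα₁)

lemma integral_rpow_le (hg₀ : 0 ≤ᵐ[μ] g) (hg : Integrable g μ) (hα₀ : 0 ≤ α) (hα₁ : α ≤ 1) :
    ∫ u, g u ^ α ∂μ ≤ μ.real univ ^ (1 - α) * (∫ u, g u ∂μ) ^ α := by
  rcases eq_zero_or_neZero μ with rfl | _
  · simp only [integral_zero_measure]; positivity
  have hgα : Integrable (fun u => g u ^ α) μ := (hg.norm_rpow_of_le_one hα₀ hα₁).congr
    (hg₀.mono fun u hu => by simp only [Real.norm_of_nonneg hu])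
  have jensen := (Real.concaveOn_rpow hα₀ hα₁).le_map_average
    (Real.continuous_rpow_const hα₀).continuousOn isClosed_Ici hg₀ hg hgα
  have hm : 0 < μ.real univ := measureReal_univ_pos
  rw [average_eq, average_eq, smul_eq_mul, smul_eq_mul,
    Real.mul_rpow (inv_nonneg.mpr hm.le) (integral_nonneg_of_ae hg₀), Real.inv_rpow hm.le,
    ← div_eq_inv_mul, ← div_eq_inv_mul, div_le_iff₀ hm] at jensen
  calc ∫ u, g u ^ α ∂μ ≤ _ := jensen
    _ = _ := by rw [Real.rpow_sub hm, Real.rpow_one]; field_simp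

end PowerMean

lemma intervalIntegral_eq_mul_min {h : ℝ → ℝ} {c σ τ : ℝ} (hσ : 0 ≤ σ) (hτ : 0 ≤ τ)
    (h_lt : EqOn h (fun _ => c) (Ico 0 τ)) (h_ge : EqOn h 0 (Ici τ)) :
    ∫ t in 0..σ, h t = c * min σ τ := by
  have hh : EqOn h ((Iio τ).indicator fun _ => c) (Ioo 0 σ) := fun t ht => by
    rcases lt_or_ge t τ with htτ | htτ
    · rw [indicator_of_mem (show t ∈ Iio τ from htτ), h_lt ⟨ht.1.le, htτ⟩]
    · rw [indicator_of_notMem (show t ∉ Iio τ from not_lt.mpr htτ), h_ge htτ, Pi.zero_apply]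
  rw [intervalIntegral.integral_of_le hσ, integral_Ioc_eq_integral_Ioo,
    setIntegral_congr_fun measurableSet_Ioo hh, setIntegral_indicator measurableSet_Iio,
    setIntegral_const, Ioo_inter_Iio, measureReal_def, Real.volume_Ioo, sub_zero,
    ENNReal.toReal_ofReal (le_min hσ hτ), smul_eq_mul, mul_comm]

lemma mul_intervalIntegral_le_of_antitoneOn {F : ℝ → ℝ} {σ τ : ℝ} (hF : AntitoneOn F (Ioc 0 τ))
    (hFi : IntervalIntegrable F volume 0 τ) (hσ : 0 ≤ σ) (hστ : σ ≤ τ) :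
    σ * ∫ t in 0..τ, F t ≤ τ * ∫ t in 0..σ, F t := by
  rcases hσ.eq_or_lt with rfl | hσ
  · simp
  have hσmem : σ ∈ Ioc 0 τ := ⟨hσ, hστ⟩
  have hFi₁ : IntervalIntegrable F volume 0 σ :=
    hFi.mono_set (uIcc_subset_uIcc_left (mem_uIcc_of_le hσ.le hστ))
  have hFi₂ : IntervalIntegrable F volume σ τ :=
    hFi.mono_set (uIcc_subset_uIcc_right (mem_uIcc_of_le hσ.le hστ))
  have head : σ * F σ ≤ ∫ t in 0..σ, F t := by
    simpa [mul_comm] using intervalIntegral.integral_mono_on_of_le_Ioo hσ.le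
      intervalIntegrable_const hFi₁ fun t ht => hF ⟨ht.1, ht.2.le.trans hστ⟩ hσmem ht.2.le
  have tail : ∫ t in σ..τ, F t ≤ (τ - σ) * F σ := by
    simpa using intervalIntegral.integral_mono_on hστ hFi₂ intervalIntegrable_const
      fun t ht => hF hσmem ⟨hσ.trans_le ht.1, ht.2⟩ ht.1
  rw [← intervalIntegral.integral_add_adjacent_intervals hFi₁ hFi₂]
  nlinarith [mul_le_mul_of_nonneg_left tail hσ.le,
    mul_le_mul_of_nonneg_left head (sub_nonneg.mpr hστ)]

lemma intervalIntegral_rpow_le {G : ℝ → ℝ} {σ α : ℝ} (hG₀ : ∀ t, 0 ≤ G t)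
    (hG : IntervalIntegrable G volume 0 σ) (hσ : 0 ≤ σ) (hα₀ : 0 ≤ α) (hα₁ : α ≤ 1) :
    ∫ t in 0..σ, G t ^ α ≤ σ ^ (1 - α) * (∫ t in 0..σ, G t) ^ α := by
  simp only [intervalIntegral.integral_of_le hσ]
  simpa [Real.volume_Ioc, hσ] using integral_rpow_le (ae_of_all _ hG₀)
    ((intervalIntegrable_iff_integrableOn_Ioc_of_le hσ).mp hG) hα₀ hα₁

lemma decRear_nonneg (f : ℝ → ℝ) (t : ℝ) : 0 ≤ decRear f t := by
  rw [decRear_eq_decRearrangement]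
  exact decRearrangement_nonneg

lemma decRear_rpow {f : ℝ → ℝ} (hf : ∀ t, 0 ≤ f t) {α : ℝ} (hα : 0 < α) (t : ℝ) :
    decRear (fun u => f u ^ α) t = decRear f t ^ α := by
  simp only [decRear_eq_decRearrangement, decRearrangement_rpow hf hα]

lemma antitoneOn_decRear {f : ℝ → ℝ} (hfi : IntegrableOn f (Icc 0 1)) :
    AntitoneOn (decRear f) (Ioi 0) := by
  rw [decRear_eq_decRearrangement]
  exact decRearrangement_antitoneOn hfi

lemma intervalIntegrable_decRear {f : ℝ → ℝ} (hfi : IntegrableOn f (Icc 0 1)) {σ : ℝ}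
    (hσ : 0 ≤ σ) : IntervalIntegrable (decRear f) volume 0 σ := by
  rw [decRear_eq_decRearrangement, intervalIntegrable_iff_integrableOn_Ioc_of_le hσ]
  exact (integrableOn_decRearrangement hfi).mono_set Ioc_subset_Ioi_self

lemma intervalIntegral_comp_decRear_indicator {φ : ℝ → ℝ} (hφ : φ 0 = 0) {c σ τ : ℝ}
    (hc : 0 ≤ c) (hσ : 0 ≤ σ) (hτ : τ ∈ Icc 0 1) :
    ∫ t in 0..σ, φ (decRear ((Ioc 0 τ).indicator fun _ => c) t) = φ c * min σ τ := by
  have hvol : (volume.restrict (Icc (0:ℝ) 1)).real (Ioc 0 τ) = τ := by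
    rw [measureReal_restrict_apply measurableSet_Ioc,
      inter_eq_left.mpr (Ioc_subset_Icc_self.trans (Icc_subset_Icc_right hτ.2)),
      Real.volume_real_Ioc_of_le hτ.1, sub_zero]
  rw [decRear_eq_decRearrangement]
  refine intervalIntegral_eq_mul_min hσ hτ.1 (fun t ht => ?_) (fun t ht => ?_)
  · simp only [decRearrangement_indicator_of_lt hc ht.1 (hvol ▸ ht.2)]
  · simp only [decRearrangement_indicator_of_le (hvol.symm ▸ ht), hφ, Pi.zero_apply]

lemma hlMaj_indicator_average {f : ℝ → ℝ} (hfi : IntegrableOn f (Icc 0 1)) {τ : ℝ}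
    (hτ : τ ∈ Ioc 0 1) :
    HLMaj ((Ioc 0 τ).indicator fun _ => (∫ t in 0..τ, decRear f t) / τ) f 1 := by
  intro σ hσ
  have hc : 0 ≤ (∫ t in 0..τ, decRear f t) / τ :=
    div_nonneg (intervalIntegral.integral_nonneg hτ.1.le fun t _ => decRear_nonneg f t) hτ.1.le
  rw [one_mul, intervalIntegral_comp_decRear_indicator (φ := fun r => r) rfl hc hσ.1
    (Ioc_subset_Icc_self hτ)]
  rcases le_total τ σ with hτσ | hστ
  · rw [min_eq_right hτσ, div_mul_cancel₀ _ hτ.1.ne']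
    exact intervalIntegral.integral_mono_interval le_rfl hτ.1.le hτσ
      (ae_of_all _ (decRear_nonneg f)) (intervalIntegrable_decRear hfi hσ.1)
  · rw [min_eq_left hστ, div_mul_eq_mul_div, div_le_iff₀ hτ.1]
    linarith [mul_intervalIntegral_le_of_antitoneOn
      ((antitoneOn_decRear hfi).mono Ioc_subset_Ioi_self)
      (intervalIntegrable_decRear hfi hτ.1.le) hσ.1 hστ]

lemma hlMaj_rpow_of_forall_le {f x : ℝ → ℝ} (hf : ∀ t, 0 ≤ f t) (hx : ∀ t, 0 ≤ x t)
    (hxi : IntegrableOn x (Icc 0 1)) {α C : ℝ} (hα₀ : 0 < α) (hα₁ : α ≤ 1)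
    (H : ∀ τ ∈ Ioc (0:ℝ) 1,
      τ ^ (1 - α) * (∫ t in 0..τ, decRear f t) ^ α ≤ C * ∫ t in 0..τ, decRear f t ^ α)
    (hmaj : HLMaj x f 1) : HLMaj (fun t => x t ^ α) (fun t => f t ^ α) C := by
  intro σ hσ
  simp only [decRear_rpow hx hα₀, decRear_rpow hf hα₀]
  rcases hσ.1.eq_or_lt with rfl | hσ₀
  · simp
  calc ∫ t in 0..σ, decRear x t ^ α
      ≤ σ ^ (1 - α) * (∫ t in 0..σ, decRear x t) ^ α :=
        intervalIntegral_rpow_le (decRear_nonneg x) (intervalIntegrable_decRear hxi hσ.1) hσ.1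
          hα₀.le hα₁
    _ ≤ σ ^ (1 - α) * (∫ t in 0..σ, decRear f t) ^ α := by
        gcongr
        · exact intervalIntegral.integral_nonneg hσ.1 fun t _ => decRear_nonneg x t
        · simpa using hmaj σ hσ
    _ ≤ C * ∫ t in 0..σ, decRear f t ^ α := H σ ⟨hσ₀, hσ.2⟩

lemma le_of_forall_hlMaj_rpow {f : ℝ → ℝ} (hf : ∀ t, 0 ≤ f t) (hfi : IntegrableOn f (Icc 0 1))
    {α C : ℝ} (hα₀ : 0 < α)
    (H : ∀ x : ℝ → ℝ, (∀ t, 0 ≤ x t) → IntegrableOn x (Icc 0 1) →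
      HLMaj x f 1 → HLMaj (fun t => x t ^ α) (fun t => f t ^ α) C)
    {τ : ℝ} (hτ : τ ∈ Ioc 0 1) :
    τ ^ (1 - α) * (∫ t in 0..τ, decRear f t) ^ α ≤ C * ∫ t in 0..τ, decRear f t ^ α := by
  set I := ∫ t in 0..τ, decRear f t
  have hI : 0 ≤ I := intervalIntegral.integral_nonneg hτ.1.le fun t _ => decRear_nonneg f t
  have hc : 0 ≤ I / τ := div_nonneg hI hτ.1.le
  have hx : ∀ t, 0 ≤ (Ioc 0 τ).indicator (fun _ => I / τ) t := indicator_nonneg fun _ _ => hc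
  have key := H _ hx ((integrable_const _).indicator measurableSet_Ioc)
    (hlMaj_indicator_average hfi hτ) τ (Ioc_subset_Icc_self hτ)
  simp only [decRear_rpow hx hα₀, decRear_rpow hf hα₀] at key
  rw [intervalIntegral_comp_decRear_indicator (φ := (· ^ α)) (Real.zero_rpow hα₀.ne') hc hτ.1.le
    (Ioc_subset_Icc_self hτ), min_self] at key
  calc τ ^ (1 - α) * I ^ α = (I / τ) ^ α * τ := by
        rw [Real.div_rpow hI hτ.1.le, Real.rpow_sub hτ.1, Real.rpow_one]
        field_simp
    _ ≤ C * ∫ t in 0..τ, decRear f t ^ α := key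

theorem lemma5_general (f : ℝ → ℝ) (hf : ∀ t, 0 ≤ f t)
    (hfi : IntegrableOn f (Set.Icc (0:ℝ) 1))
    (α C : ℝ) (hα0 : 0 < α) (hα1 : α < 1) :
    (∀ x : ℝ → ℝ, (∀ t, 0 ≤ x t) → IntegrableOn x (Set.Icc (0:ℝ) 1) →
        HLMaj x f 1 → HLMaj (fun t => x t ^ α) (fun t => f t ^ α) C)
      ↔ (∀ τ ∈ Set.Ioc (0:ℝ) 1,
          τ ^ (1 - α) * (∫ t in (0:ℝ)..τ, decRear f t) ^ α
            ≤ C * ∫ t in (0:ℝ)..τ, (decRear f t) ^ α) :=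
  ⟨fun H _ hτ => le_of_forall_hlMaj_rpow hf hfi hα0 H hτ,
    fun H _ hx hxi hmaj => hlMaj_rpow_of_forall_le hf hx hxi hα0 hα1.le H hmaj⟩

theorem lemma5 (f : ℝ → ℝ) (hf : ∀ t, 0 ≤ f t)
    (hfi : IntegrableOn f (Set.Icc (0:ℝ) 1))
    (α C : ℝ) (hα0 : 0 < α) (hα1 : α < 1) (hC : 1 < C) :
    (∀ x : ℝ → ℝ, (∀ t, 0 ≤ x t) → IntegrableOn x (Set.Icc (0:ℝ) 1) →
        HLMaj x f 1 → HLMaj (fun t => x t ^ α) (fun t => f t ^ α) C)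
      ↔ (∀ τ ∈ Set.Ioc (0:ℝ) 1,
          τ ^ (1 - α) * (∫ t in (0:ℝ)..τ, decRear f t) ^ α
            ≤ C * ∫ t in (0:ℝ)..τ, (decRear f t) ^ α) :=
  lemma5_general f hf hfi α C hα0 hα1
end

section
/- For the identity matrix I_n, define f(π) = |{k : π(k) = k}| (number of fixed points of π ∈ S_n, equal to Σ_k (I_n)_{k,π(k)}), viewed as a random variable on S_n with uniform measure. Then for every 0 < α < 1 and every τ ∈ (0,1], τ^{1-α}·(∫_0^τ f*(t) dt)^α ≤ 6·∫_0^τ (f*(t))^α dt, where f* is the decreasing rearrangement of f on [0,1]. -/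
open scoped Classical

/-- The decreasing rearrangement on `[0,1]` of the fixed-point-count function on
`S_n` with normalized counting measure. -/
noncomputable def fixStar (n : ℕ) (t : ℝ) : ℝ :=
  sInf {s : ℝ | 0 ≤ s ∧
    ((Finset.univ.filter (fun π : Equiv.Perm (Fin n) =>
        s < ((Finset.univ.filter (fun k : Fin n => π k = k)).card : ℝ))).card : ℝ)
      / (Nat.factorial n : ℝ) ≤ t}

/-!
Write `a j` for the probability that a uniform permutation of `Fin n` has more than `j` fixed
points. For `t > 0`, `fixStar n t` is the number of `j < n` with `t < a j`, so by the layer-cake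
formula `∫₀^τ f* = ∑ⱼ min τ (a j)` and `∫₀^τ (f*)^α = ∑ⱼ ((j + 1)^α - j^α) min τ (a j)`.
Counting permutations that fix a given set, and using `n!/3 ≤ Dₙ ≤ n!/2` for the derangement
numbers, gives `1/(3 (j+2)!) ≤ a j ≤ 1/(j+1)!`; hence `a 0 ≥ 1/2` and the tail `∑_{i>j} a i` is
at most `6 a j`. Let `m` be the first index with `a m ≤ τ`. If `0 < m < n`, the first sum is at
most `m τ + 7 a m`, and concavity of `x ↦ x^α` bounds the left-hand side by `m^α τ + 7 α a m`,
which is at most six times the second sum. If `m = n` both sides are explicit, and if `m = 0` the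
left-hand side is at most `2` while the second sum is at least `a 0 ≥ 1/2`.
-/

open Finset Nat Equiv

theorem factorial_add_four (k : ℕ) : (k + 4)! = (k + 3) * ((k + 2)! + (k + 3)!) := by
  simp only [factorial_succ, show k + 3 = k + 2 + 1 from rfl]
  ring

theorem numDerangements_bounds (k : ℕ) :
    2 * numDerangements (k + 2) ≤ (k + 2)! ∧ (k + 2)! ≤ 3 * numDerangements (k + 2) := by
  induction k using Nat.twoStepInduction with
  | zero => decide
  | one => decide
  | more k h₀ h₁ =>
    have hD : numDerangements (k + 4) =
        (k + 3) * (numDerangements (k + 2) + numDerangements (k + 3)) :=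
      numDerangements_add_two (k + 2)
    rw [show k + 1 + 2 = k + 3 from rfl] at h₁
    rw [show k + 2 + 2 = k + 4 from rfl, hD, factorial_add_four, mul_left_comm,
      mul_left_comm 3]
    constructor <;> gcongr <;> omega

theorem two_mul_numDerangements_le {k : ℕ} (hk : 1 ≤ k) : 2 * numDerangements k ≤ k ! := by
  obtain _ | _ | k := k
  · omega
  · simp
  · exact (numDerangements_bounds k).1

theorem factorial_le_three_mul_numDerangements {k : ℕ} (hk : k ≠ 1) :
    k ! ≤ 3 * numDerangements k := by
  obtain _ | _ | k := k
  · simp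
  · omega
  · exact (numDerangements_bounds k).2

namespace Equiv.Perm

variable {α : Type*} [Fintype α] [DecidableEq α]

def fixedFinset (π : Perm α) : Finset α := {x | π x = x}

theorem card_fixing (S : Finset α) :
    #{π : Perm α | ∀ x ∈ S, π x = x} = (Fintype.card α - #S)! := by
  rw [← Fintype.card_subtype, ← Fintype.card_coe S, ← Fintype.card_subtype_compl,
    ← Fintype.card_perm]
  refine Fintype.card_congr ((Equiv.subtypeEquivRight fun π => ?_).trans
    (Perm.subtypeEquivSubtypePerm (· ∉ S)).symm)
  exact ⟨fun h x hx => h x (not_not.mp hx), fun h x hx => h x (not_not_intro hx)⟩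

theorem card_fixedFinset_eq (S : Finset α) :
    #{π : Perm α | π.fixedFinset = S} = numDerangements (Fintype.card α - #S) := by
  rw [← Fintype.card_subtype, ← Fintype.card_coe S, ← Fintype.card_subtype_compl,
    ← card_derangements_eq_numDerangements]
  refine Fintype.card_congr ((Equiv.subtypeEquivRight fun π => ?_).trans
    (derangements.subtypeEquiv (· ∉ S)).symm)
  simp [Finset.ext_iff, fixedFinset, Function.IsFixedPt, eq_comm]

theorem card_card_fixedFinset_eq (k : ℕ) :
    #{π : Perm α | #π.fixedFinset = k} =
      (Fintype.card α).choose k * numDerangements (Fintype.card α - k) := by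
  rw [card_eq_sum_card_fiberwise (f := fixedFinset) (t := powersetCard k univ)
    (fun π hπ => by simpa using hπ)]
  calc ∑ S ∈ powersetCard k univ, #{π ∈ {π : Perm α | #π.fixedFinset = k} | π.fixedFinset = S}
      = ∑ S ∈ powersetCard k (univ : Finset α), numDerangements (Fintype.card α - k) := by
        refine sum_congr rfl fun S hS => ?_
        rw [← (mem_powersetCard.mp hS).2, ← card_fixedFinset_eq, filter_filter]
        congr 1
        exact filter_congr fun π _ => and_iff_right_of_imp (congrArg _)
    _ = _ := by rw [sum_const, card_powersetCard, Finset.card_univ, smul_eq_mul]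

theorem card_lt_card_fixedFinset_mul_factorial_le (j : ℕ) :
    #{π : Perm α | j < #π.fixedFinset} * (j + 1)! ≤ (Fintype.card α)! := by
  have hcover : ({π | j < #π.fixedFinset} : Finset (Perm α)) ⊆
      (powersetCard (j + 1) univ).biUnion fun S => {π : Perm α | ∀ x ∈ S, π x = x} := by
    intro π hπ
    obtain ⟨S, hS, hcard⟩ := exists_subset_card_eq (mem_filter.mp hπ).2
    simp only [mem_biUnion, mem_powersetCard, mem_filter, mem_univ, true_and]
    exact ⟨S, ⟨subset_univ S, hcard⟩, fun x hx => (mem_filter.mp (hS hx)).2⟩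
  have hcount : #{π : Perm α | j < #π.fixedFinset} ≤
      (Fintype.card α).choose (j + 1) * (Fintype.card α - (j + 1))! := by
    refine (card_le_card hcover).trans (card_biUnion_le.trans ?_)
    rw [sum_congr rfl fun S hS => by rw [card_fixing, (mem_powersetCard.mp hS).2], sum_const,
      card_powersetCard, Finset.card_univ, smul_eq_mul]
  rcases le_or_gt (j + 1) (Fintype.card α) with hj | hj
  · calc _ ≤ (Fintype.card α).choose (j + 1) * (Fintype.card α - (j + 1))! * (j + 1)! := by
          gcongr
      _ = (Fintype.card α)! := by
          rw [← choose_mul_factorial_mul_factorial hj]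
          ring
  · rw [choose_eq_zero_of_lt hj, zero_mul, Nat.le_zero] at hcount
    simp [hcount]

theorem choose_mul_numDerangements_le_card_lt_card_fixedFinset (j : ℕ) :
    (Fintype.card α).choose (j + 1) * numDerangements (Fintype.card α - (j + 1)) ≤
      #{π : Perm α | j < #π.fixedFinset} := by
  rw [← card_card_fixedFinset_eq]
  exact card_le_card (monotone_filter_right _ fun π h => by omega)

theorem factorial_le_three_mul_factorial_mul_card_lt_card_fixedFinset {j : ℕ}
    (hj : j < Fintype.card α) :
    (Fintype.card α)! ≤ 3 * (j + 2)! * #{π : Perm α | j < #π.fixedFinset} := by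
  set n := Fintype.card α
  rcases le_or_gt n (j + 2) with hn | hn
  · have hone : 1 ≤ #{π : Perm α | j < #π.fixedFinset} :=
      card_pos.mpr ⟨1, mem_filter.mpr ⟨mem_univ _, by simpa [fixedFinset] using hj⟩⟩
    calc n ! ≤ (j + 2)! := factorial_le hn
      _ ≤ 3 * (j + 2)! * #{π : Perm α | j < #π.fixedFinset} := by nlinarith
  · calc n ! = n.choose (j + 1) * (j + 1)! * (n - (j + 1))! :=
          (choose_mul_factorial_mul_factorial hj).symm
      _ ≤ n.choose (j + 1) * (j + 2)! * (3 * numDerangements (n - (j + 1))) := by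
          refine Nat.mul_le_mul (Nat.mul_le_mul_left _ (factorial_le (by omega))) ?_
          exact factorial_le_three_mul_numDerangements (by omega)
      _ = 3 * (j + 2)! * (n.choose (j + 1) * numDerangements (n - (j + 1))) := by ring
      _ ≤ 3 * (j + 2)! * #{π : Perm α | j < #π.fixedFinset} := by
          gcongr
          exact choose_mul_numDerangements_le_card_lt_card_fixedFinset j

theorem card_pos_card_fixedFinset_add_numDerangements :
    #{π : Perm α | 0 < #π.fixedFinset} + numDerangements (Fintype.card α) =
      (Fintype.card α)! := by
  have h := card_card_fixedFinset_eq (α := α) 0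
  rw [choose_zero_right, one_mul, Nat.sub_zero] at h
  rw [← h, ← Fintype.card_perm, ← Finset.card_univ, ← card_filter_add_card_filter_not
    (s := univ) (fun π : Perm α => 0 < #π.fixedFinset)]
  simp only [Nat.pos_iff_ne_zero, not_not]

end Equiv.Perm

theorem Antitone.exists_filter_range_lt_eq_range {β : Type*} [Preorder β] {a : ℕ → β}
    (ha : Antitone a) (t : β) (n : ℕ) : ∃ m ≤ n, {j ∈ range n | t < a j} = range m := by
  induction n with
  | zero => exact ⟨0, le_rfl, rfl⟩
  | succ n ih =>
    by_cases hn : t < a n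
    · refine ⟨n + 1, le_rfl, filter_true_of_mem fun j hj => ?_⟩
      exact hn.trans_le (ha (mem_range_succ_iff.mp hj))
    · obtain ⟨m, hmn, hm⟩ := ih
      exact ⟨m, hmn.trans n.le_succ, by rw [range_add_one, filter_insert, if_neg hn, hm]⟩

theorem lt_iff_of_filter_range_lt_eq_range {β : Type*} [Preorder β] {a : ℕ → β} {t : β}
    {m n j : ℕ} (hm : {j ∈ range n | t < a j} = range m) (hj : j < n) : t < a j ↔ j < m := by
  simpa [hj] using congrArg (j ∈ ·) hm

theorem sum_range_mul_min_eq {a w : ℕ → ℝ} {τ : ℝ} {m n : ℕ} (hmn : m ≤ n)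
    (hm : {j ∈ range n | τ < a j} = range m) :
    ∑ j ∈ range n, w j * min τ (a j) = (∑ j ∈ range m, w j) * τ + ∑ j ∈ Ico m n, w j * a j := by
  rw [← sum_range_add_sum_Ico _ hmn, sum_mul]
  congr 1 <;> refine sum_congr rfl fun j hj => ?_
  · have hjm := mem_range.mp hj
    rw [min_eq_left ((lt_iff_of_filter_range_lt_eq_range hm (by omega)).mpr hjm).le]
  · obtain ⟨hmj, hjn⟩ := mem_Ico.mp hj
    rw [min_eq_right (not_lt.mp fun h => by
      have := (lt_iff_of_filter_range_lt_eq_range hm hjn).mp h; omega)]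

noncomputable def rpowStep (α : ℝ) (j : ℕ) : ℝ := ((j : ℝ) + 1) ^ α - (j : ℝ) ^ α

theorem rpowStep_nonneg {α : ℝ} (hα : 0 ≤ α) (j : ℕ) : 0 ≤ rpowStep α j :=
  sub_nonneg.mpr (Real.rpow_le_rpow (Nat.cast_nonneg j) (by linarith) hα)

theorem rpowStep_zero_right {α : ℝ} (hα : α ≠ 0) : rpowStep α 0 = 1 := by
  simp [rpowStep, Real.zero_rpow hα]

theorem rpowStep_one_left (j : ℕ) : rpowStep 1 j = 1 := by
  simp [rpowStep]

theorem sum_range_rpowStep {α : ℝ} (hα : α ≠ 0) (m : ℕ) :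
    ∑ j ∈ range m, rpowStep α j = (m : ℝ) ^ α := by
  simpa [rpowStep, Real.zero_rpow hα] using sum_range_sub (fun j : ℕ => (j : ℝ) ^ α) m

namespace Real

theorem rpow_one_sub_mul_mul_rpow {τ y : ℝ} (α : ℝ) (hτ : 0 < τ) (hy : 0 ≤ y) :
    τ ^ (1 - α) * (τ * y) ^ α = τ * y ^ α := by
  rw [mul_rpow hτ.le hy, ← mul_assoc, ← rpow_add hτ, sub_add_cancel, rpow_one]

theorem one_sub_rpow_mul_rpow_le_two {τ x α : ℝ} (hτ₀ : 0 < τ) (hτ₁ : τ ≤ 1) (hx₀ : 0 ≤ x)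
    (hx : x ≤ 2) (hα₀ : 0 ≤ α) (hα₁ : α ≤ 1) : τ ^ (1 - α) * x ^ α ≤ 2 := by
  calc τ ^ (1 - α) * x ^ α ≤ 1 * 2 ^ (1 : ℝ) := by
        refine mul_le_mul (rpow_le_one hτ₀.le hτ₁ (by linarith)) ?_ (by positivity) zero_le_one
        exact (rpow_le_rpow hx₀ hx hα₀).trans (rpow_le_rpow_of_exponent_le one_le_two hα₁)
    _ = 2 := by norm_num

theorem rpow_add_le_rpow_add_mul {x t α : ℝ} (hx : 1 ≤ x) (ht : 0 ≤ t) (hα₀ : 0 ≤ α)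
    (hα₁ : α ≤ 1) : (x + t) ^ α ≤ x ^ α + α * t := by
  have hx₀ : 0 < x := by linarith
  have hbern : (1 + t / x) ^ α ≤ 1 + α * (t / x) :=
    rpow_one_add_le_one_add_mul_self (by have := div_nonneg ht hx₀.le; linarith) hα₀ hα₁
  have hxα : x ^ α ≤ x := by simpa using rpow_le_rpow_of_exponent_le hx hα₁
  calc (x + t) ^ α = x ^ α * (1 + t / x) ^ α := by
        rw [← mul_rpow hx₀.le (by positivity), mul_add, mul_one, mul_div_cancel₀ _ hx₀.ne']
    _ ≤ x ^ α * (1 + α * (t / x)) := by gcongr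
    _ = x ^ α + x ^ α / x * (α * t) := by ring
    _ ≤ x ^ α + 1 * (α * t) := by
        gcongr
        exact (div_le_one hx₀).mpr hxα
    _ = x ^ α + α * t := by ring

theorem one_add_half_mul_le_rpow {x α : ℝ} (hx : 2 ≤ x) (hα : 0 ≤ α) : 1 + α / 2 ≤ x ^ α := by
  have hexp : log 2 * α + 1 ≤ (2 : ℝ) ^ α := by
    rw [rpow_def_of_pos two_pos]
    exact add_one_le_exp _
  have hlog : 1 / 2 * α ≤ log 2 * α := by
    gcongr
    linarith [log_two_gt_d9]
  linarith [rpow_le_rpow two_pos.le hx hα]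

end Real

open Real in
theorem rpow_mul_add_le_six_mul {m α τ c : ℝ} (hm : 1 ≤ m) (hα₀ : 0 ≤ α) (hα₁ : α ≤ 1)
    (hτ : 0 < τ) (hc : 0 ≤ c) (hcτ : c ≤ τ) :
    τ ^ (1 - α) * (m * τ + 7 * c) ^ α ≤ 6 * (m ^ α * τ + ((m + 1) ^ α - m ^ α) * c) := by
  have hconcave : τ ^ (1 - α) * (m * τ + 7 * c) ^ α ≤ m ^ α * τ + 7 * α * c := by
    calc τ ^ (1 - α) * (m * τ + 7 * c) ^ α = τ * (m + 7 * c / τ) ^ α := by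
          rw [← rpow_one_sub_mul_mul_rpow α hτ (by positivity), mul_add,
            mul_div_cancel₀ _ hτ.ne', mul_comm τ m]
      _ ≤ τ * (m ^ α + α * (7 * c / τ)) := by
          gcongr
          exact rpow_add_le_rpow_add_mul hm (by positivity) hα₀ hα₁
      _ = m ^ α * τ + 7 * α * c := by field_simp
  have hgrowth : 7 * α ≤ 5 * (m + 1) ^ α := by
    linarith [one_add_half_mul_le_rpow (x := m + 1) (by linarith) hα₀]
  have hmono : m ^ α ≤ (m + 1) ^ α := rpow_le_rpow (by linarith) (by linarith) hα₀
  have hmα : 0 ≤ m ^ α := rpow_nonneg (by linarith) α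
  nlinarith [mul_le_mul_of_nonneg_left hcτ hmα, mul_le_mul_of_nonneg_right hgrowth hc,
    mul_le_mul_of_nonneg_right hmono hc]

open Real in
theorem rpow_sum_min_le_six_mul {a : ℕ → ℝ} {n : ℕ} {α τ : ℝ} (ha : Antitone a)
    (ha₀ : ∀ j, 0 ≤ a j) (htail : ∀ m < n, ∑ j ∈ Ico (m + 1) n, a j ≤ 6 * a m)
    (hsum : ∑ j ∈ range n, a j ≤ 2) (hhalf : 1 / 2 ≤ a 0)
    (hα₀ : 0 < α) (hα₁ : α < 1) (hτ₀ : 0 < τ) (hτ₁ : τ ≤ 1) :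
    τ ^ (1 - α) * (∑ j ∈ range n, min τ (a j)) ^ α ≤
      6 * ∑ j ∈ range n, rpowStep α j * min τ (a j) := by
  obtain ⟨m, hmn, hm⟩ := ha.exists_filter_range_lt_eq_range τ n
  have hX := sum_range_mul_min_eq (w := 1) hmn hm
  simp only [Pi.one_apply, one_mul, sum_const, card_range, nsmul_one] at hX
  have hY := sum_range_mul_min_eq (w := rpowStep α) hmn hm
  rw [sum_range_rpowStep hα₀.ne'] at hY
  rw [hX, hY]
  rcases hmn.eq_or_lt with rfl | hmn
  · simp only [Ico_self, sum_empty, add_zero]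
    rw [mul_comm (m : ℝ), rpow_one_sub_mul_mul_rpow α hτ₀ (Nat.cast_nonneg m)]
    have : 0 ≤ (m : ℝ) ^ α * τ := by positivity
    linarith
  have ham : a m ≤ τ := not_lt.mp fun h =>
    ((lt_iff_of_filter_range_lt_eq_range hm hmn).mp h).false
  have hY_ge : rpowStep α m * a m ≤ ∑ j ∈ Ico m n, rpowStep α j * a j :=
    single_le_sum (fun j _ => mul_nonneg (rpowStep_nonneg hα₀.le j) (ha₀ j))
      (mem_Ico.mpr ⟨le_rfl, hmn⟩)
  rcases Nat.eq_zero_or_pos m with rfl | hm₁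
  · rw [rpowStep_zero_right hα₀.ne', one_mul, ← range_eq_Ico] at hY_ge
    rw [Nat.cast_zero, zero_mul, zero_add, zero_rpow hα₀.ne', zero_mul, zero_add,
      ← range_eq_Ico]
    linarith [one_sub_rpow_mul_rpow_le_two hτ₀ hτ₁ (sum_nonneg fun j _ => ha₀ j) hsum hα₀.le
      hα₁.le]
  · have hX_le : m * τ + ∑ j ∈ Ico m n, a j ≤ m * τ + 7 * a m := by
      rw [sum_eq_sum_Ico_succ_bot hmn]
      linarith [htail m hmn]
    calc τ ^ (1 - α) * (m * τ + ∑ j ∈ Ico m n, a j) ^ α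
        ≤ τ ^ (1 - α) * (m * τ + 7 * a m) ^ α := by
          have : 0 ≤ ∑ j ∈ Ico m n, a j := sum_nonneg fun j _ => ha₀ j
          gcongr
      _ ≤ 6 * ((m : ℝ) ^ α * τ + rpowStep α m * a m) :=
          rpow_mul_add_le_six_mul (by exact_mod_cast hm₁) hα₀.le hα₁.le hτ₀ (ha₀ m) ham
      _ ≤ _ := by linarith

theorem antitone_indicator_Iio_one (a : ℝ) : Antitone ((Set.Iio a).indicator (1 : ℝ → ℝ)) := by
  intro x y hxy
  by_cases hy : y < a
  · simp [Set.indicator_of_mem, hy, hxy.trans_lt hy]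
  · simp only [Set.indicator_of_notMem (show y ∉ Set.Iio a from hy)]
    exact Set.indicator_nonneg (fun _ _ => zero_le_one) x

open MeasureTheory in
theorem integral_indicator_Iio_one {a τ : ℝ} (ha : 0 ≤ a) (hτ : 0 ≤ τ) :
    ∫ t in (0 : ℝ)..τ, (Set.Iio a).indicator 1 t = min τ a := by
  rw [intervalIntegral.integral_of_le hτ, integral_indicator_one measurableSet_Iio,
    measureReal_restrict_apply measurableSet_Iio]
  rcases le_or_gt a τ with h | h
  · have hset : Set.Iio a ∩ Set.Ioc 0 τ = Set.Ioo 0 a := by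
      ext x
      simp only [Set.mem_inter_iff, Set.mem_Iio, Set.mem_Ioc, Set.mem_Ioo]
      grind
    rw [min_eq_right h, hset, Real.volume_real_Ioo_of_le ha, sub_zero]
  · have hset : Set.Iio a ∩ Set.Ioc 0 τ = Set.Ioc 0 τ := by
      ext x
      simp only [Set.mem_inter_iff, Set.mem_Iio, Set.mem_Ioc]
      grind
    rw [min_eq_left h.le, hset, Real.volume_real_Ioc_of_le hτ, sub_zero]

noncomputable def fixedPointTail (n j : ℕ) : ℝ :=
  #{π : Perm (Fin n) | j < #π.fixedFinset} / n !

theorem fixedPointTail_nonneg (n j : ℕ) : 0 ≤ fixedPointTail n j := by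
  unfold fixedPointTail
  positivity

theorem fixedPointTail_antitone (n : ℕ) : Antitone (fixedPointTail n) := by
  intro i j hij
  unfold fixedPointTail
  gcongr

theorem fixedPointTail_eq_zero {n j : ℕ} (h : n ≤ j) : fixedPointTail n j = 0 := by
  have hempty : ({π | j < #π.fixedFinset} : Finset (Perm (Fin n))) = ∅ :=
    filter_false_of_mem fun π _ => by
      have := card_le_univ π.fixedFinset
      simp only [Fintype.card_fin] at this
      omega
  simp [fixedPointTail, hempty]

theorem fixedPointTail_le (n j : ℕ) : fixedPointTail n j ≤ ((j + 1)! : ℝ)⁻¹ := by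
  have h := Perm.card_lt_card_fixedFinset_mul_factorial_le (α := Fin n) j
  rw [Fintype.card_fin] at h
  rw [fixedPointTail, div_le_iff₀ (by positivity), ← div_eq_inv_mul,
    le_div_iff₀ (by positivity)]
  exact_mod_cast h

theorem le_fixedPointTail {n j : ℕ} (hj : j < n) :
    (3 * (j + 2)! : ℝ)⁻¹ ≤ fixedPointTail n j := by
  have h := Perm.factorial_le_three_mul_factorial_mul_card_lt_card_fixedFinset
    (α := Fin n) (j := j) (by simpa using hj)
  rw [Fintype.card_fin] at h
  rw [fixedPointTail, le_div_iff₀ (by positivity), ← div_eq_inv_mul,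
    div_le_iff₀ (by positivity)]
  have : (n ! : ℝ) ≤ 3 * (j + 2)! * #{π : Perm (Fin n) | j < #π.fixedFinset} := by
    exact_mod_cast h
  linarith

theorem one_half_le_fixedPointTail_zero {n : ℕ} (hn : 1 ≤ n) :
    1 / 2 ≤ fixedPointTail n 0 := by
  have h₁ := Perm.card_pos_card_fixedFinset_add_numDerangements (α := Fin n)
  have h₂ := two_mul_numDerangements_le hn
  rw [Fintype.card_fin] at h₁
  rw [fixedPointTail, le_div_iff₀ (by positivity)]
  have : (n ! : ℝ) ≤ 2 * #{π : Perm (Fin n) | 0 < #π.fixedFinset} := by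
    exact_mod_cast (by omega : n ! ≤ 2 * #{π : Perm (Fin n) | 0 < #π.fixedFinset})
  linarith

theorem sum_Ico_fixedPointTail_le (n m : ℕ) :
    ∑ j ∈ Ico m n, fixedPointTail n j ≤ 2 / (m + 1)! := by
  have hterm (i : ℕ) : fixedPointTail n (m + i) ≤ ((m + 1)! : ℝ)⁻¹ * (1 / 2) ^ i := by
    refine (fixedPointTail_le n _).trans ?_
    rw [one_div_pow, one_div, ← mul_inv]
    gcongr
    rw [show m + i + 1 = m + 1 + i by ring]
    calc ((m + 1)! : ℝ) * 2 ^ i ≤ (m + 1)! * (m + 1 + 1) ^ i := by gcongr; linarith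
      _ ≤ (m + 1 + i)! := by exact_mod_cast factorial_mul_pow_le_factorial
  calc ∑ j ∈ Ico m n, fixedPointTail n j
      = ∑ i ∈ range (n - m), fixedPointTail n (m + i) := sum_Ico_eq_sum_range _ _ _
    _ ≤ ∑ i ∈ range (n - m), ((m + 1)! : ℝ)⁻¹ * (1 / 2) ^ i := sum_le_sum fun i _ => hterm i
    _ ≤ ((m + 1)! : ℝ)⁻¹ * 2 := by
        rw [← mul_sum]
        gcongr
        exact sum_geometric_two_le _
    _ = 2 / (m + 1)! := by ring

theorem sum_Ico_fixedPointTail_le_six_mul {n m : ℕ} (hm : m < n) :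
    ∑ j ∈ Ico (m + 1) n, fixedPointTail n j ≤ 6 * fixedPointTail n m := by
  calc ∑ j ∈ Ico (m + 1) n, fixedPointTail n j ≤ 2 / (m + 2)! := sum_Ico_fixedPointTail_le n _
    _ = 6 * (3 * (m + 2)! : ℝ)⁻¹ := by field_simp; norm_num
    _ ≤ 6 * fixedPointTail n m := by gcongr; exact le_fixedPointTail hm

theorem sum_range_fixedPointTail_le_two (n : ℕ) : ∑ j ∈ range n, fixedPointTail n j ≤ 2 := by
  rw [range_eq_Ico]
  simpa using sum_Ico_fixedPointTail_le n 0

theorem fixedPointTail_le_iff {n m j : ℕ} {t : ℝ} (ht : 0 < t) (hmn : m ≤ n)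
    (hm : {j ∈ range n | t < fixedPointTail n j} = range m) :
    fixedPointTail n j ≤ t ↔ m ≤ j := by
  rcases lt_or_ge j n with hj | hj
  · rw [← not_lt, lt_iff_of_filter_range_lt_eq_range hm hj, not_lt]
  · simp only [fixedPointTail_eq_zero hj, ht.le, true_iff]
    omega

theorem fixStar_eq {n m : ℕ} {t : ℝ} (ht : 0 < t) (hmn : m ≤ n)
    (hm : {j ∈ range n | t < fixedPointTail n j} = range m) : fixStar n t = m := by
  have hlevel {s : ℝ} (hs : 0 ≤ s) :
      (#{π : Perm (Fin n) | s < (#π.fixedFinset : ℝ)} : ℝ) / n ! = fixedPointTail n ⌊s⌋₊ := by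
    simp only [fixedPointTail, Nat.floor_lt hs]
  have hset : {s : ℝ | 0 ≤ s ∧ (#{π : Perm (Fin n) | s < (#π.fixedFinset : ℝ)} : ℝ) / n ! ≤ t}
      = Set.Ici (m : ℝ) := by
    ext s
    simp only [Set.mem_ofPred_eq, Set.mem_Ici]
    refine ⟨fun ⟨hs, h⟩ => ?_, fun h => ?_⟩
    · rw [hlevel hs, fixedPointTail_le_iff ht hmn hm] at h
      exact (Nat.le_floor_iff hs).mp h
    · have hs : 0 ≤ s := (Nat.cast_nonneg m).trans h
      rw [hlevel hs, fixedPointTail_le_iff ht hmn hm]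
      exact ⟨hs, Nat.le_floor h⟩
  exact (congrArg sInf hset).trans csInf_Ici

theorem fixStar_rpow_eq_sum (n : ℕ) {α t : ℝ} (hα : 0 < α) (ht : 0 < t) :
    fixStar n t ^ α =
      ∑ j ∈ range n, rpowStep α j * (Set.Iio (fixedPointTail n j)).indicator 1 t := by
  obtain ⟨m, hmn, hm⟩ := (fixedPointTail_antitone n).exists_filter_range_lt_eq_range t n
  rw [fixStar_eq ht hmn hm, ← sum_range_rpowStep hα.ne', ← hm, sum_filter]
  simp [Set.indicator_apply]

theorem integral_fixStar_rpow (n : ℕ) {α τ : ℝ} (hα : 0 < α) (hτ : 0 < τ) :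
    ∫ t in (0 : ℝ)..τ, fixStar n t ^ α =
      ∑ j ∈ range n, rpowStep α j * min τ (fixedPointTail n j) := by
  have hae : ∀ᵐ t, t ∈ Set.uIoc (0 : ℝ) τ → fixStar n t ^ α =
      ∑ j ∈ range n, rpowStep α j * (Set.Iio (fixedPointTail n j)).indicator 1 t :=
    Filter.Eventually.of_forall fun t ht =>
      fixStar_rpow_eq_sum n hα (by rw [Set.uIoc_of_le hτ.le] at ht; exact ht.1)
  rw [intervalIntegral.integral_congr_ae hae, intervalIntegral.integral_finsetSum
    fun j _ => ((antitone_indicator_Iio_one _).intervalIntegrable).const_mul _]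
  refine sum_congr rfl fun j _ => ?_
  rw [intervalIntegral.integral_const_mul,
    integral_indicator_Iio_one (fixedPointTail_nonneg n j) hτ.le]

theorem integral_fixStar (n : ℕ) {τ : ℝ} (hτ : 0 < τ) :
    ∫ t in (0 : ℝ)..τ, fixStar n t = ∑ j ∈ range n, min τ (fixedPointTail n j) := by
  simpa [rpowStep_one_left] using integral_fixStar_rpow n one_pos hτ

theorem lemma6 (n : ℕ) (hn : 1 ≤ n) (α τ : ℝ) (hα0 : 0 < α) (hα1 : α < 1)
    (hτ : τ ∈ Set.Ioc (0:ℝ) 1) :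
    τ ^ (1 - α) * (∫ t in (0:ℝ)..τ, fixStar n t) ^ α
      ≤ 6 * ∫ t in (0:ℝ)..τ, (fixStar n t) ^ α := by
  obtain ⟨hτ₀, hτ₁⟩ := hτ
  rw [integral_fixStar n hτ₀, integral_fixStar_rpow n hα0 hτ₀]
  exact rpow_sum_min_le_six_mul (fixedPointTail_antitone n) (fixedPointTail_nonneg n)
    (fun m hm => sum_Ico_fixedPointTail_le_six_mul hm) (sum_range_fixedPointTail_le_two n)
    (one_half_le_fixedPointTail_zero hn) hα0 hα1 hτ₀ hτ₁
end

section
/- Let s_j = (1/j!)·Σ_{k=0}^{n-j} (-1)^k/k! be the probability that a uniformly random permutation of {1,...,n} has exactly j fixed points. Then for every j with 1 ≤ j ≤ n and j ≠ n-1: (i) Σ_{i=j}^n s_i ≤ 3·s_j, and (ii) Σ_{i=j}^n i·s_i ≤ 3·j·s_j. -/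
/-!
With `E m = ∑_{k ≤ m} (-1)^k / k!` (the probability that a permutation of `m` points is a
derangement) we have `s i = E (n - i) / i!`, and with `j = m + 1`, `c = n - j` claim (ii) reads
`∑_{d ≤ c} E (c - d) / (m + d)! ≤ 3 E c / m!`. Since `E (m + 2)` is a convex combination of
`E m` and `E (m + 1)`, starting from `E 2 = 1/2`, `E 3 = 1/3` we get `E m ∈ [1/3, 1/2]` for
`m ≥ 2`; as `E 0 = 1`, `3 E c ≥ 1` unless `c = 1`. So it suffices to bound the left side by `1/m!`.
For `m = 0` it equals `1` (the expected number of fixed points), by the binomial theorem for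
`(1 - 1)^t`. For `m ≥ 1` the last two terms are `0` and `1/(m + c)!`, all others have
`E ≤ 1/2`, and `(m + d)! ≥ m! 2^d` bounds the rest by a geometric series.
Claim (i) follows from (ii) because `i ≥ j` throughout the sum.
-/

open Finset Nat

noncomputable def expNegOneSum (m : ℕ) : ℝ := ∑ k ∈ range (m + 1), (-1 : ℝ) ^ k / (k ! : ℝ)

namespace expNegOneSum

lemma zero : expNegOneSum 0 = 1 := by simp [expNegOneSum]

lemma one : expNegOneSum 1 = 0 := by norm_num [expNegOneSum, sum_range_succ]

lemma succ (m : ℕ) :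
    expNegOneSum (m + 1) = expNegOneSum m + (-1 : ℝ) ^ (m + 1) / ((m + 1)! : ℝ) :=
  sum_range_succ _ _

-- The derangement recurrence `d (m+2) = (m+1) (d m + d (m+1))`, divided by `(m+2)!`.
lemma add_two (m : ℕ) :
    expNegOneSum (m + 2) =
      expNegOneSum (m + 1) + ((m : ℝ) + 2)⁻¹ * (expNegOneSum m - expNegOneSum (m + 1)) := by
  rw [succ (m + 1), succ m, factorial_succ (m + 1)]
  push_cast
  field_simp
  ring

lemma mem_of_le {S : Set ℝ} (hS : Convex ℝ S) {m₀ : ℕ} (h₀ : expNegOneSum m₀ ∈ S)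
    (h₁ : expNegOneSum (m₀ + 1) ∈ S) {m : ℕ} (hm : m₀ ≤ m) : expNegOneSum m ∈ S := by
  suffices ∀ m, m₀ ≤ m → expNegOneSum m ∈ S ∧ expNegOneSum (m + 1) ∈ S from (this m hm).1
  intro m hm
  induction m, hm using Nat.le_induction with
  | base => exact ⟨h₀, h₁⟩
  | succ m _ ih =>
    refine ⟨ih.2, ?_⟩
    have ht : ((m : ℝ) + 2)⁻¹ ∈ Set.Icc (0 : ℝ) 1 :=
      ⟨by positivity, inv_le_one_of_one_le₀ (by linarith [(m.cast_nonneg : (0 : ℝ) ≤ m)])⟩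
    rw [add_two]
    exact hS.add_smul_sub_mem ih.2 ih.1 ht

lemma nonneg (m : ℕ) : 0 ≤ expNegOneSum m :=
  (mem_of_le (convex_Ici 0) (m₀ := 0) (by norm_num [zero]) (by norm_num [one]) m.zero_le :)

lemma mem_Icc_of_two_le {m : ℕ} (hm : 2 ≤ m) : expNegOneSum m ∈ Set.Icc (1 / 3) (1 / 2) :=
  mem_of_le (convex_Icc _ _) (by norm_num [expNegOneSum, sum_range_succ])
    (by norm_num [expNegOneSum, sum_range_succ]) hm

lemma one_le_three_mul {m : ℕ} (hm : m ≠ 1) : 1 ≤ 3 * expNegOneSum m := by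
  rcases m with _ | _ | m
  · norm_num [zero]
  · exact absurd rfl hm
  · linarith [(mem_Icc_of_two_le (m := m + 2) (by omega)).1]

end expNegOneSum

lemma sum_alternating_div_factorial_mul_factorial (t : ℕ) :
    ∑ i ∈ range (t + 1), (-1 : ℝ) ^ (t - i) / ((t - i)! * i ! : ℝ) = 0 ^ t / t ! := by
  have h := add_pow (1 : ℝ) (-1) t
  rw [add_neg_cancel] at h
  rw [h, sum_div]
  refine sum_congr rfl fun i hi => ?_
  rw [Nat.cast_choose ℝ (mem_range_succ_iff.mp hi)]
  field_simp
  ring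

lemma sum_expNegOneSum_div_factorial (c : ℕ) :
    ∑ i ∈ range (c + 1), expNegOneSum (c - i) / (i ! : ℝ) = 1 := by
  have hflip := sum_range_diag_flip (c + 1) fun i k => (-1 : ℝ) ^ k / (k ! * i ! : ℝ)
  calc ∑ i ∈ range (c + 1), expNegOneSum (c - i) / (i ! : ℝ)
      = ∑ i ∈ range (c + 1), ∑ k ∈ range (c + 1 - i), (-1 : ℝ) ^ k / (k ! * i ! : ℝ) := by
        refine sum_congr rfl fun i hi => ?_
        rw [expNegOneSum, sum_div, Nat.sub_add_comm (mem_range_succ_iff.mp hi)]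
        simp only [div_div]
    _ = ∑ t ∈ range (c + 1), (0 : ℝ) ^ t / t ! := by
        rw [← hflip]
        exact sum_congr rfl fun t _ => sum_alternating_div_factorial_mul_factorial t
    _ = 1 := by
        rw [sum_range_succ']
        simp

lemma inv_factorial_add_le {m : ℕ} (hm : 1 ≤ m) (d : ℕ) :
    ((m + d)! : ℝ)⁻¹ ≤ (m ! : ℝ)⁻¹ * (1 / 2) ^ d := by
  have h : (2 ^ d * m ! : ℝ) ≤ (m + d)! := by
    rw [mul_comm]
    exact_mod_cast (Nat.mul_le_mul_left _ (Nat.pow_le_pow_left (by omega) d)).trans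
      factorial_mul_pow_le_factorial
  rw [one_div_pow, ← div_eq_inv_mul, div_div, one_div]
  exact inv_anti₀ (by positivity) h

lemma sum_range_inv_factorial_add_le {m : ℕ} (hm : 1 ≤ m) (N : ℕ) :
    ∑ d ∈ range N, ((m + d)! : ℝ)⁻¹ ≤ 2 * (m ! : ℝ)⁻¹ :=
  calc ∑ d ∈ range N, ((m + d)! : ℝ)⁻¹ ≤ ∑ d ∈ range N, (m ! : ℝ)⁻¹ * (1 / 2) ^ d :=
        sum_le_sum fun d _ => inv_factorial_add_le hm d
    _ ≤ 2 * (m ! : ℝ)⁻¹ := by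
        rw [← mul_sum, mul_comm]
        exact mul_le_mul_of_nonneg_right (sum_geometric_two_le N) (by positivity)

lemma sum_expNegOneSum_div_factorial_add_le (m : ℕ) {c : ℕ} (hc : c ≠ 1) :
    ∑ d ∈ range (c + 1), expNegOneSum (c - d) / ((m + d)! : ℝ) ≤ (m ! : ℝ)⁻¹ := by
  rcases Nat.eq_zero_or_pos m with rfl | hm
  · simp [sum_expNegOneSum_div_factorial]
  obtain rfl | ⟨c, rfl⟩ : c = 0 ∨ ∃ c', c = c' + 2 := by
    rcases c with _ | _ | c <;> simp_all
  · simp [expNegOneSum.zero]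
  -- The last two terms are `0` and `1 / (m + c + 2)! ≤ 1 / (m + c + 1)!`: on average at most `1/2`.
  have hlast : ((m + (c + 2))! : ℝ)⁻¹ ≤ ((m + (c + 1))! : ℝ)⁻¹ :=
    inv_anti₀ (by positivity) (by exact_mod_cast factorial_le (by omega))
  have hhead : ∀ d ∈ range (c + 1),
      expNegOneSum (c + 2 - d) / ((m + d)! : ℝ) ≤ 1 / 2 * ((m + d)! : ℝ)⁻¹ := by
    intro d hd
    rw [div_eq_mul_inv]
    gcongr
    exact (expNegOneSum.mem_Icc_of_two_le (by simp at hd; omega)).2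
  calc ∑ d ∈ range (c + 2 + 1), expNegOneSum (c + 2 - d) / ((m + d)! : ℝ)
      = ∑ d ∈ range (c + 1), expNegOneSum (c + 2 - d) / ((m + d)! : ℝ)
          + ((m + (c + 2))! : ℝ)⁻¹ := by
        simp [sum_range_succ, expNegOneSum.zero, expNegOneSum.one,
          show c + 2 - (c + 1) = 1 by omega]
    _ ≤ 1 / 2 * ∑ d ∈ range (c + 2 + 1), ((m + d)! : ℝ)⁻¹ := by
        rw [sum_range_succ (fun d => ((m + d)! : ℝ)⁻¹) (c + 2),
          sum_range_succ (fun d => ((m + d)! : ℝ)⁻¹) (c + 1), mul_add, mul_add, mul_sum]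
        linarith [sum_le_sum hhead]
    _ ≤ (m ! : ℝ)⁻¹ := by
        linarith [sum_range_inv_factorial_add_le hm (c + 2 + 1)]

lemma sum_Icc_natCast_mul_div_factorial (f : ℕ → ℝ) (m n : ℕ) :
    ∑ i ∈ Icc (m + 1) n, (i : ℝ) * (f i / (i ! : ℝ)) =
      ∑ d ∈ range (n - m), f (m + 1 + d) / ((m + d)! : ℝ) := by
  rw [← Ico_add_one_right_eq_Icc, sum_Ico_eq_sum_range, Nat.add_sub_add_right]
  refine sum_congr rfl fun d _ => ?_
  rw [show m + 1 + d = m + d + 1 by omega, factorial_succ]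
  push_cast
  field_simp

lemma sum_le_sum_natCast_mul_div {s : Finset ℕ} {f : ℕ → ℝ} {j : ℕ} (hj : 0 < j)
    (hf : ∀ i ∈ s, 0 ≤ f i) (hs : ∀ i ∈ s, j ≤ i) :
    ∑ i ∈ s, f i ≤ (∑ i ∈ s, (i : ℝ) * f i) / j := by
  rw [le_div_iff₀ (by exact_mod_cast hj), sum_mul]
  refine sum_le_sum fun i hi => ?_
  rw [mul_comm]
  exact mul_le_mul_of_nonneg_right (by exact_mod_cast hs i hi) (hf i hi)

theorem fixed_point_prob_bounds (n j : ℕ) (hj : 1 ≤ j) (hjn : j ≤ n) (hne : j ≠ n - 1)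
    (s : ℕ → ℝ)
    (hs : ∀ i, s i = (1 / (Nat.factorial i : ℝ)) * ∑ k ∈ Finset.range (n - i + 1), (-1 : ℝ) ^ k / (Nat.factorial k : ℝ)) :
    (∑ i ∈ Finset.Icc j n, s i ≤ 3 * s j) ∧
    (∑ i ∈ Finset.Icc j n, (i : ℝ) * s i ≤ 3 * (j : ℝ) * s j) := by
  obtain ⟨m, rfl⟩ : ∃ m, j = m + 1 := ⟨j - 1, by omega⟩
  have hs' : ∀ i, s i = expNegOneSum (n - i) / (i ! : ℝ) := fun i => by
    rw [hs, expNegOneSum, one_div_mul_eq_div]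
  have hmul : ∑ i ∈ Icc (m + 1) n, (i : ℝ) * s i ≤ 3 * ((m + 1 : ℕ) : ℝ) * s (m + 1) :=
    calc ∑ i ∈ Icc (m + 1) n, (i : ℝ) * s i
        = ∑ d ∈ range (n - (m + 1) + 1), expNegOneSum (n - (m + 1) - d) / ((m + d)! : ℝ) := by
          simp only [hs', sum_Icc_natCast_mul_div_factorial, Nat.sub_sub]
          rw [show n - (m + 1) + 1 = n - m by omega]
      _ ≤ (m ! : ℝ)⁻¹ := sum_expNegOneSum_div_factorial_add_le m (by omega)
      _ ≤ 3 * expNegOneSum (n - (m + 1)) / (m ! : ℝ) := by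
          rw [inv_eq_one_div]
          gcongr
          exact expNegOneSum.one_le_three_mul (by omega)
      _ = 3 * ((m + 1 : ℕ) : ℝ) * s (m + 1) := by
          rw [hs', factorial_succ]
          push_cast
          field_simp
  refine ⟨?_, hmul⟩
  calc ∑ i ∈ Icc (m + 1) n, s i
      ≤ (∑ i ∈ Icc (m + 1) n, (i : ℝ) * s i) / ((m + 1 : ℕ) : ℝ) :=
        sum_le_sum_natCast_mul_div m.succ_pos
          (fun i _ => hs' i ▸ div_nonneg (expNegOneSum.nonneg _) (by positivity))
          (fun i hi => (mem_Icc.mp hi).1)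
    _ ≤ 3 * ((m + 1 : ℕ) : ℝ) * s (m + 1) / ((m + 1 : ℕ) : ℝ) := by gcongr
    _ = 3 * s (m + 1) := by field_simp
end

section
/- For integers 0 < j ≤ k < n, the probability μ(n,k,j) that a uniformly random permutation of {1,...,n} fixes exactly j points among {1,...,k} satisfies μ(n,k,j) = (k/(nj))·μ(n-1,k-1,j-1), and hence μ(n,k,j) ≤ (1/j!)·(k/n)^j. -/
open scoped Classical

/-- `μ(n,k,j)`: the probability that a uniformly random permutation of `{1,...,n}`
fixes exactly `j` points among the first `k`. -/
noncomputable def mu (n k j : ℕ) : ℝ :=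
  ((Finset.univ.filter (fun π : Equiv.Perm (Fin n) =>
      (Finset.univ.filter (fun i : Fin n => (i : ℕ) < k ∧ π i = i)).card = j)).card : ℝ)
    / (Nat.factorial n : ℝ)

open Finset Equiv


noncomputable def cnt (α : Type*) [Fintype α] [DecidableEq α] (K : Finset α) (j : ℕ) : ℕ :=
  (Finset.univ.filter (fun π : Equiv.Perm α =>
    (K.filter (fun i => π i = i)).card = j)).card

lemma fix_iff {α : Type*} (i : α) (π : Equiv.Perm α) (hπ : π i = i) :
    ∀ x, π x ≠ i ↔ x ≠ i := by
  intro x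
  constructor
  · intro h hx
    exact h (hx ▸ hπ)
  · intro h hx
    exact h (π.injective (hx.trans hπ.symm))

lemma filter_fix_card {α : Type*} [Fintype α] [DecidableEq α] (K : Finset α) {i : α} (hi : i ∈ K)
    (π : Equiv.Perm α) (hπ : π i = i) :
    (K.filter (fun x => π x = x)).card
      = (((K.erase i).subtype (· ≠ i)).filter
          (fun x => π.subtypePerm (fix_iff i π hπ) x = x)).card + 1 := by
  have h1 : ((K.erase i).subtype (· ≠ i)).filter
        (fun x => π.subtypePerm (fix_iff i π hπ) x = x)
      = ((K.erase i).filter (fun x => π x = x)).subtype (· ≠ i) := by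
    ext ⟨x, hx⟩
    simp [Finset.mem_subtype, Finset.mem_filter, Finset.mem_erase,
      Equiv.Perm.subtypePerm_apply, Subtype.ext_iff, hx, and_assoc, and_comm]
  rw [h1, Finset.card_subtype]
  rw [Finset.filter_true_of_mem (fun x hx => (Finset.mem_erase.1 (Finset.mem_filter.1 hx).1).1)]
  have h2 : K.filter (fun x => π x = x) = insert i ((K.erase i).filter (fun x => π x = x)) := by
    ext x
    by_cases hxi : x = i
    · subst hxi; simp [hi, hπ]
    · simp [hxi, Finset.mem_erase]
  rw [h2, Finset.card_insert_of_notMem (by simp)]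

lemma cntFix {α : Type*} [Fintype α] [DecidableEq α] (K : Finset α) {i : α} (hi : i ∈ K)
    {j : ℕ} (hj : 0 < j) :
    (Finset.univ.filter (fun π : Equiv.Perm α =>
        π i = i ∧ (K.filter (fun x => π x = x)).card = j)).card
    = cnt {x : α // x ≠ i} ((K.erase i).subtype (· ≠ i)) (j - 1) := by
  unfold cnt
  symm
  apply Finset.card_bij (fun σ _ => Equiv.Perm.ofSubtype σ)
  · intro σ hσ
    have hcard := (Finset.mem_filter.1 hσ).2
    have hfix : Equiv.Perm.ofSubtype σ i = i :=
      Equiv.Perm.ofSubtype_apply_of_not_mem σ (by simp)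
    refine Finset.mem_filter.2 ⟨Finset.mem_univ _, hfix, ?_⟩
    rw [filter_fix_card K hi _ hfix]
    have hsp : (Equiv.Perm.ofSubtype σ).subtypePerm (fix_iff i _ hfix) = σ :=
      Equiv.Perm.subtypePerm_ofSubtype σ
    rw [hsp]
    have h' : (((K.erase i).subtype (· ≠ i)).filter (fun x => σ x = x)).card = j - 1 := by
      convert hcard using 2
    omega
  · intro σ _ σ' _ h
    have h1 := Equiv.Perm.subtypePerm_ofSubtype (p := fun x => x ≠ i) σ
    have h2 := Equiv.Perm.subtypePerm_ofSubtype (p := fun x => x ≠ i) σ'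
    rw [← h1, ← h2]
    congr 1
  · intro π hπ
    obtain ⟨-, hfix, hcard⟩ := Finset.mem_filter.1 hπ
    refine ⟨π.subtypePerm (fix_iff i π hfix), ?_, ?_⟩
    · simp only [Finset.mem_filter, Finset.mem_univ, true_and, Finset.filter_congr_decidable]
      rw [filter_fix_card K hi π hfix] at hcard
      have h' : (((K.erase i).subtype (· ≠ i)).filter
          (fun x => π.subtypePerm (fix_iff i π hfix) x = x)).card
          = (Finset.filter (fun x => π.subtypePerm (fix_iff i π hfix) x = x)
              ((K.erase i).subtype (· ≠ i))).card := by
        exact congrArg Finset.card (Finset.ext (fun a => by simp [Finset.mem_filter]))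
      omega
    · exact Equiv.Perm.ofSubtype_subtypePerm _ (fun x hx hxi => hx (hxi ▸ hfix))

lemma cnt_congr {α β : Type*} [Fintype α] [Fintype β] [DecidableEq α] [DecidableEq β]
    (e : α ≃ β) (K : Finset α) (j : ℕ) :
    cnt α K j = cnt β (K.image e) j := by
  unfold cnt
  apply Finset.card_bij (fun π _ => e.permCongr π)
  · intro π hπ
    simp only [Finset.mem_filter, Finset.mem_univ, true_and] at hπ ⊢
    rw [Finset.filter_image, Finset.card_image_of_injective _ e.injective]
    rw [← hπ]
    congr 1
    apply Finset.filter_congr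
    intro a _
    simp [Equiv.permCongr_apply]
  · intro π _ π' _ h
    have := congrArg (Equiv.permCongr e.symm) h
    simpa [Equiv.permCongr_trans, Equiv.symm_trans_self] using this
  · intro σ hσ
    refine ⟨e.symm.permCongr σ, Finset.mem_filter.2 ⟨Finset.mem_univ _, ?_⟩, ?_⟩
    · simp only [Finset.mem_filter, Finset.mem_univ, true_and] at hσ
      rw [← hσ]
      rw [Finset.filter_image, Finset.card_image_of_injective _ e.injective]
      congr 1
      apply Finset.filter_congr
      intro a _
      rw [Equiv.permCongr_apply, Equiv.symm_symm, Equiv.symm_apply_eq]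
    · ext x
      simp [Equiv.permCongr_apply]

lemma equiv_mapping {α β : Type*} [Fintype α] [Fintype β] [DecidableEq α] [DecidableEq β] (K : Finset α) (K' : Finset β)
    (hαβ : Fintype.card α = Fintype.card β) (hKK' : K.card = K'.card) :
    ∃ e : α ≃ β, K.image e = K' := by
  have h1 : Fintype.card {x // x ∈ K} = Fintype.card {x // x ∈ K'} := by
    simp [Fintype.card_coe, hKK']
  have h2 : Fintype.card {x // ¬ x ∈ K} = Fintype.card {x // ¬ x ∈ K'} := by
    rw [Fintype.card_subtype_compl, Fintype.card_subtype_compl, h1, hαβ]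
  let e : α ≃ β := (Equiv.sumCompl (· ∈ K)).symm.trans
    ((Equiv.sumCongr (Fintype.equivOfCardEq h1) (Fintype.equivOfCardEq h2)).trans
      (Equiv.sumCompl (· ∈ K')))
  refine ⟨e, Finset.eq_of_subset_of_card_le ?_ ?_⟩
  · intro b hb
    obtain ⟨a, ha, rfl⟩ := Finset.mem_image.1 hb
    have : e a = ((Fintype.equivOfCardEq h1) ⟨a, ha⟩ : {x // x ∈ K'}).val := by
      simp only [e, Equiv.trans_apply]
      rw [Equiv.sumCompl_symm_apply_of_pos (p := (· ∈ K)) ha]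
      rfl
    rw [this]
    exact ((Fintype.equivOfCardEq h1) ⟨a, ha⟩).property
  · rw [Finset.card_image_of_injective _ e.injective, hKK']

lemma cnt_eq_of_card {α β : Type*} [Fintype α] [Fintype β] [DecidableEq α] [DecidableEq β]
    (K : Finset α) (K' : Finset β)
    (hαβ : Fintype.card α = Fintype.card β) (hKK' : K.card = K'.card) (j : ℕ) :
    cnt α K j = cnt β K' j := by
  obtain ⟨e, he⟩ := equiv_mapping K K' hαβ hKK'
  rw [cnt_congr e K j, he]

lemma pair_count {α : Type*} [Fintype α] [DecidableEq α] (K : Finset α) (j : ℕ) :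
    j * cnt α K j = ∑ i ∈ K, (Finset.univ.filter (fun π : Equiv.Perm α =>
        π i = i ∧ (K.filter (fun x => π x = x)).card = j)).card := by
  unfold cnt
  set P := Finset.univ.filter (fun π : Equiv.Perm α =>
    (K.filter (fun x => π x = x)).card = j) with hP
  have hmem : ∀ π ∈ P, (K.filter (fun x => π x = x)).card = j :=
    fun π hπ => (Finset.mem_filter.1 hπ).2
  calc j * P.card = ∑ π ∈ P, (K.filter (fun x => π x = x)).card := by
        rw [Finset.sum_congr rfl hmem, Finset.sum_const, smul_eq_mul, mul_comm]
    _ = ∑ π ∈ P, ∑ i ∈ K, if π i = i then 1 else 0 := by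
        refine Finset.sum_congr rfl fun π _ => ?_
        rw [Finset.card_filter]
    _ = ∑ i ∈ K, ∑ π ∈ P, if π i = i then 1 else 0 := Finset.sum_comm
    _ = ∑ i ∈ K, (P.filter (fun π => π i = i)).card := by
        refine Finset.sum_congr rfl fun i _ => (Finset.card_filter _ _).symm
    _ = _ := by
        refine Finset.sum_congr rfl fun i _ => ?_
        congr 1
        rw [hP, Finset.filter_filter]
        apply Finset.filter_congr
        intro π _
        exact and_comm

lemma fin_filter_card {n k : ℕ} (hkn : k < n) :
    (Finset.univ.filter (fun i : Fin n => (i : ℕ) < k)).card = k := by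
  have : Finset.univ.filter (fun i : Fin n => (i : ℕ) < k) = Finset.Iio (⟨k, hkn⟩ : Fin n) := by
    ext x
    simp [Finset.mem_Iio, Fin.lt_def]
  rw [this, Fin.card_Iio]

lemma count_rec (n k j : ℕ) (hj : 0 < j) (hjk : j ≤ k) (hkn : k < n) :
    j * cnt (Fin n) (Finset.univ.filter fun i : Fin n => (i : ℕ) < k) j
      = k * cnt (Fin (n - 1))
          (Finset.univ.filter fun i : Fin (n - 1) => (i : ℕ) < k - 1) (j - 1) := by
  set K := Finset.univ.filter (fun i : Fin n => (i : ℕ) < k) with hK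
  have hKcard : K.card = k := fin_filter_card hkn
  rw [pair_count]
  have hconst : ∀ i ∈ K, (Finset.univ.filter (fun π : Equiv.Perm (Fin n) =>
        π i = i ∧ (K.filter (fun x => π x = x)).card = j)).card
      = cnt (Fin (n - 1))
          (Finset.univ.filter fun i : Fin (n - 1) => (i : ℕ) < k - 1) (j - 1) := by
    intro i hi
    rw [cntFix K hi hj]
    apply cnt_eq_of_card
    · simp [Fintype.card_subtype_compl]
    · rw [Finset.card_subtype, Finset.filter_true_of_mem
        (fun x hx => (Finset.mem_erase.1 hx).1), Finset.card_erase_of_mem hi, hKcard]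
      rw [fin_filter_card (by omega : k - 1 < n - 1)]
  rw [Finset.sum_congr rfl hconst, Finset.sum_const, hKcard, smul_eq_mul]

lemma mu_eq_cnt (n k j : ℕ) :
    mu n k j = (cnt (Fin n) (Finset.univ.filter fun i : Fin n => (i : ℕ) < k) j : ℝ)
      / (Nat.factorial n : ℝ) := by
  have hf : ∀ π : Equiv.Perm (Fin n),
      (Finset.univ.filter (fun i : Fin n => (i : ℕ) < k ∧ π i = i))
      = ((Finset.univ.filter fun i : Fin n => (i : ℕ) < k).filter (fun i => π i = i)) := by
    intro π; rw [Finset.filter_filter]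
  unfold mu cnt
  congr 3
  apply Finset.filter_congr
  intro π _
  rw [hf π]

lemma mu_nonneg (n k j : ℕ) : 0 ≤ mu n k j := by
  unfold mu; positivity

lemma mu_le_one (n k j : ℕ) : mu n k j ≤ 1 := by
  unfold mu
  rw [div_le_one (by positivity)]
  norm_cast
  calc (Finset.univ.filter (fun π : Equiv.Perm (Fin n) =>
      (Finset.univ.filter (fun i : Fin n => (i : ℕ) < k ∧ π i = i)).card = j)).card
      ≤ (Finset.univ : Finset (Equiv.Perm (Fin n))).card := Finset.card_filter_le _ _
    _ = n.factorial := by rw [Finset.card_univ, Fintype.card_perm, Fintype.card_fin]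

lemma mu_rec (n k j : ℕ) (hj : 0 < j) (hjk : j ≤ k) (hkn : k < n) :
    mu n k j = ((k : ℝ) / ((n : ℝ) * (j : ℝ))) * mu (n - 1) (k - 1) (j - 1) := by
  obtain ⟨m, rfl⟩ : ∃ m, n = m + 1 := ⟨n - 1, by omega⟩
  rw [mu_eq_cnt, mu_eq_cnt]
  have key := count_rec (m + 1) k j hj hjk hkn
  simp only [Nat.add_sub_cancel] at key ⊢
  set A := cnt (Fin (m + 1)) (Finset.univ.filter fun i : Fin (m + 1) => (i : ℕ) < k) j with hA
  set B := cnt (Fin m) (Finset.univ.filter fun i : Fin m => (i : ℕ) < k - 1) (j - 1) with hB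
  have keyR : (j : ℝ) * (A : ℝ) = (k : ℝ) * (B : ℝ) := by exact_mod_cast key
  have hj' : (j : ℝ) ≠ 0 := Nat.cast_ne_zero.2 (by omega)
  have hm1 : ((m : ℝ) + 1) ≠ 0 := by positivity
  have hfac : ((m.factorial : ℝ)) ≠ 0 := Nat.cast_ne_zero.2 (Nat.factorial_ne_zero m)
  rw [Nat.factorial_succ]
  push_cast
  field_simp
  change (A : ℝ) * (j : ℝ) = (k : ℝ) * (B : ℝ)
  linear_combination keyR

lemma mu_bound : ∀ j k n : ℕ, j ≤ k → k < n →
    mu n k j ≤ (1 / (Nat.factorial j : ℝ)) * ((k : ℝ) / (n : ℝ)) ^ j := by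
  intro j
  induction j with
  | zero => intro k n _ _; simpa using mu_le_one n k 0
  | succ j ih =>
    intro k n hjk hkn
    have hk : 1 ≤ k := by omega
    have hn2 : 2 ≤ n := by omega
    have hrec := mu_rec n k (j + 1) (Nat.succ_pos j) hjk hkn
    simp only [Nat.add_sub_cancel] at hrec
    have hIH := ih (k - 1) (n - 1) (by omega) (by omega)
    have hcoef : (0 : ℝ) ≤ (k : ℝ) / ((n : ℝ) * ((j : ℝ) + 1)) := by positivity
    have hnR : (0 : ℝ) < (n : ℝ) - 1 := by
      have : (2 : ℝ) ≤ (n : ℝ) := by exact_mod_cast hn2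
      linarith
    have hnR0 : (0 : ℝ) < (n : ℝ) := by positivity
    have hbase : (((k - 1 : ℕ) : ℝ) / ((n - 1 : ℕ) : ℝ)) ≤ (k : ℝ) / (n : ℝ) := by
      rw [Nat.cast_sub hk, Nat.cast_sub (by omega : 1 ≤ n)]
      push_cast
      rw [div_le_div_iff₀ hnR hnR0]
      have hknR : (k : ℝ) ≤ (n : ℝ) := by exact_mod_cast hkn.le
      nlinarith
    calc mu n k (j + 1)
        = ((k : ℝ) / ((n : ℝ) * ((j : ℝ) + 1))) * mu (n - 1) (k - 1) j := by
          rw [hrec]; push_cast; ring_nf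
      _ ≤ ((k : ℝ) / ((n : ℝ) * ((j : ℝ) + 1))) *
            ((1 / (Nat.factorial j : ℝ)) * (((k - 1 : ℕ) : ℝ) / ((n - 1 : ℕ) : ℝ)) ^ j) :=
          mul_le_mul_of_nonneg_left hIH hcoef
      _ ≤ ((k : ℝ) / ((n : ℝ) * ((j : ℝ) + 1))) *
            ((1 / (Nat.factorial j : ℝ)) * ((k : ℝ) / (n : ℝ)) ^ j) := by
          apply mul_le_mul_of_nonneg_left _ hcoef
          apply mul_le_mul_of_nonneg_left _ (by positivity)
          exact pow_le_pow_left₀ (by positivity) hbase j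
      _ = (1 / (Nat.factorial (j + 1) : ℝ)) * ((k : ℝ) / (n : ℝ)) ^ (j + 1) := by
          rw [Nat.factorial_succ]
          have hfj : (Nat.factorial j : ℝ) ≠ 0 := Nat.cast_ne_zero.2 (Nat.factorial_ne_zero j)
          have hn0 : (n : ℝ) ≠ 0 := hnR0.ne'
          push_cast
          field_simp
          rw [pow_succ, mul_comm (n : ℝ), mul_assoc, div_mul_cancel₀ _ hn0, mul_comm]

theorem mu_recurrence_and_bound (n k j : ℕ) (hj : 0 < j) (hjk : j ≤ k) (hkn : k < n) :
    mu n k j = ((k : ℝ) / ((n : ℝ) * (j : ℝ))) * mu (n - 1) (k - 1) (j - 1) ∧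
    mu n k j ≤ (1 / (Nat.factorial j : ℝ)) * ((k : ℝ) / (n : ℝ)) ^ j :=
  ⟨mu_rec n k j hj hjk hkn, mu_bound j k n hjk hkn⟩
end

section
/- Let 0 < α ≤ 1, a ≥ 1, q ≥ 1, and let φ : [0,1] → [0,1] be increasing and concave with φ(0) = 0, φ(1) = 1, and φ(t) ≤ a·t^α for all t ∈ [0,1]. Then Γ := sup_{0 < t ≤ 1} (1/φ(t))·Σ_{j=1}^∞ j^{(1/q)-1}·φ(t^j/j!) ≤ 5a/α. -/
/-!
Every weight `j ^ (1 / q - 1)` is at most `1`. For `j ≤ 1 / α` monotonicity gives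
`φ (t ^ j / j!) ≤ φ t`, so these terms contribute at most `φ t / α`. For `j > 1 / α` the bound
`φ x ≤ a x ^ α`, together with `j! ≥ 2 ^ (j - 1)` and `t ^ (j α) ≤ t ≤ φ t` (concavity), dominates
the terms by the geometric series `a φ t 2 ^ (-α (j - 1))`, whose sum is at most
`a φ t / (1 - 2 ^ (-α)) ≤ 2 a φ t / α` by Bernoulli's inequality. Altogether the sum is at most
`(1 + 2 a) φ t / α ≤ 5 a φ t / α`.
-/

open Finset Real

lemma Nat.two_pow_pred_le_factorial (j : ℕ) : 2 ^ (j - 1) ≤ j.factorial := by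
  cases j with
  | zero => simp
  | succ k => simpa [add_comm] using Nat.factorial_mul_pow_le_factorial (m := 1) (n := k)

lemma Real.div_two_le_one_sub_half_rpow {α : ℝ} (hα0 : 0 ≤ α) (hα1 : α ≤ 1) :
    α / 2 ≤ 1 - (1 / 2 : ℝ) ^ α := by
  have h := rpow_one_add_le_one_add_mul_self (s := -1 / 2) (by norm_num) hα0 hα1
  norm_num at h
  linarith

lemma ConcaveOn.self_le_apply_of_mem_Icc {φ : ℝ → ℝ} (hconc : ConcaveOn ℝ (Set.Icc 0 1) φ)
    (h0 : φ 0 = 0) (h1 : φ 1 = 1) {t : ℝ} (ht : t ∈ Set.Icc (0 : ℝ) 1) : t ≤ φ t := by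
  have h := hconc.2 (Set.left_mem_Icc.mpr zero_le_one) (Set.right_mem_Icc.mpr zero_le_one)
    (sub_nonneg.mpr ht.2) ht.1 (sub_add_cancel 1 t)
  simpa [h0, h1] using h

lemma natCast_rpow_one_div_sub_one_mul_le {q y : ℝ} (hq : 1 ≤ q) (hy : 0 ≤ y) {j : ℕ}
    (hj : 1 ≤ j) : (j : ℝ) ^ (1 / q - 1) * y ≤ y :=
  mul_le_of_le_one_left hy <| rpow_le_one_of_one_le_of_nonpos (mod_cast hj)
    (by linarith [div_le_one_of_le₀ hq (by linarith)])

lemma pow_div_factorial_mem_Icc {t : ℝ} (ht : t ∈ Set.Icc (0 : ℝ) 1) (j : ℕ) :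
    t ^ j / j.factorial ∈ Set.Icc (0 : ℝ) 1 :=
  ⟨by have := ht.1; positivity, div_le_one_of_le₀ ((pow_le_one₀ ht.1 ht.2).trans
    (mod_cast j.factorial_pos)) (by positivity)⟩

lemma pow_div_factorial_le_self {t : ℝ} (ht0 : 0 ≤ t) (ht1 : t ≤ 1) {j : ℕ} (hj : 1 ≤ j) :
    t ^ j / j.factorial ≤ t :=
  calc t ^ j / j.factorial ≤ t ^ j := div_le_self (by positivity) (mod_cast j.factorial_pos)
    _ ≤ t := pow_le_of_le_one ht0 ht1 (by omega)

lemma rpow_pow_div_factorial_le {t α : ℝ} (ht0 : 0 ≤ t) (ht1 : t ≤ 1) (hα : 0 ≤ α) {j : ℕ}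
    (hjα : 1 ≤ j * α) : (t ^ j / j.factorial) ^ α ≤ t * ((1 / 2) ^ α) ^ (j - 1) := by
  have hfact : t ^ j / j.factorial ≤ t ^ j * (1 / 2) ^ (j - 1) := by
    rw [one_div_pow, ← div_eq_mul_one_div]
    exact div_le_div_of_nonneg_left (by positivity) (by positivity)
      (mod_cast Nat.two_pow_pred_le_factorial j)
  calc (t ^ j / j.factorial) ^ α ≤ (t ^ j * (1 / 2) ^ (j - 1)) ^ α :=
        rpow_le_rpow (by positivity) hfact hα
    _ = t ^ (j * α) * ((1 / 2) ^ α) ^ (j - 1) := by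
        rw [mul_rpow (by positivity) (by positivity), rpow_natCast_mul ht0,
          rpow_pow_comm (by norm_num)]
    _ ≤ t * ((1 / 2) ^ α) ^ (j - 1) := by
        gcongr
        simpa using rpow_le_rpow_of_exponent_ge' ht0 ht1 zero_le_one hjα

lemma apply_pow_div_factorial_le_geometric {φ : ℝ → ℝ} {a α t : ℝ}
    (hbound : ∀ x ∈ Set.Icc (0 : ℝ) 1, φ x ≤ a * x ^ α) (ha : 0 ≤ a) (hα : 0 ≤ α)
    (ht : t ∈ Set.Icc (0 : ℝ) 1) (htφ : t ≤ φ t) {j : ℕ} (hjα : 1 ≤ j * α) :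
    φ (t ^ j / j.factorial) ≤ a * φ t * ((1 / 2) ^ α) ^ (j - 1) :=
  calc φ (t ^ j / j.factorial) ≤ a * (t ^ j / j.factorial) ^ α :=
        hbound _ (pow_div_factorial_mem_Icc ht j)
    _ ≤ a * (t * ((1 / 2) ^ α) ^ (j - 1)) := by
        gcongr; exact rpow_pow_div_factorial_le ht.1 ht.2 hα hjα
    _ ≤ a * φ t * ((1 / 2) ^ α) ^ (j - 1) := by
        rw [← mul_assoc]; gcongr

lemma sum_Icc_pow_pred_le {r : ℝ} (hr0 : 0 ≤ r) (hr1 : r < 1) (N : ℕ) :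
    ∑ j ∈ Icc 1 N, r ^ (j - 1) ≤ 1 / (1 - r) := by
  rw [← Ico_add_one_right_eq_Icc, sum_Ico_eq_sum_range]
  simp only [add_tsub_cancel_left, add_tsub_cancel_right]
  have := geom_sum_Ico_le_of_lt_one (m := 0) (n := N) hr0 hr1
  rw [← range_eq_Ico] at this
  simpa using this

lemma sum_Icc_le_of_le_of_le_geometric {f : ℕ → ℝ} {A B r : ℝ} {J N : ℕ}
    (hA : 0 ≤ A) (hB : 0 ≤ B) (hr0 : 0 ≤ r) (hr1 : r < 1)
    (hhead : ∀ j ∈ Icc 1 N, j ≤ J → f j ≤ A)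
    (htail : ∀ j ∈ Icc 1 N, J < j → f j ≤ B * r ^ (j - 1)) :
    ∑ j ∈ Icc 1 N, f j ≤ J * A + B / (1 - r) := by
  rw [← sum_filter_add_sum_filter_not (Icc 1 N) (· ≤ J)]
  gcongr
  · have hcard : #{j ∈ Icc 1 N | j ≤ J} ≤ J := by
      simpa using card_le_card (s := {j ∈ Icc 1 N | j ≤ J}) (t := Icc 1 J) fun j hj => by
        simp only [mem_filter, mem_Icc] at hj ⊢; omega
    calc ∑ j ∈ Icc 1 N with j ≤ J, f j ≤ ∑ j ∈ Icc 1 N with j ≤ J, A :=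
          sum_le_sum fun j hj => hhead j (mem_filter.mp hj).1 (mem_filter.mp hj).2
      _ ≤ J * A := by rw [sum_const, nsmul_eq_mul]; gcongr
  · calc ∑ j ∈ Icc 1 N with ¬j ≤ J, f j ≤ ∑ j ∈ Icc 1 N with ¬j ≤ J, B * r ^ (j - 1) :=
          sum_le_sum fun j hj => htail j (mem_filter.mp hj).1 (not_le.mp (mem_filter.mp hj).2)
      _ ≤ ∑ j ∈ Icc 1 N, B * r ^ (j - 1) :=
          sum_le_sum_of_subset_of_nonneg (filter_subset _ _) fun _ _ _ => by positivity
      _ ≤ B / (1 - r) := by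
          rw [← mul_sum, div_eq_mul_one_div]
          exact mul_le_mul_of_nonneg_left (sum_Icc_pow_pred_le hr0 hr1 N) hB

theorem lemma11 (α a q : ℝ) (hα0 : 0 < α) (hα1 : α ≤ 1) (ha : 1 ≤ a) (hq : 1 ≤ q)
    (φ : ℝ → ℝ) (hmono : MonotoneOn φ (Set.Icc (0:ℝ) 1))
    (hconc : ConcaveOn ℝ (Set.Icc (0:ℝ) 1) φ)
    (h0 : φ 0 = 0) (h1 : φ 1 = 1)
    (hbound : ∀ t ∈ Set.Icc (0:ℝ) 1, φ t ≤ a * t ^ α) :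
    ∀ t ∈ Set.Ioc (0:ℝ) 1, ∀ N : ℕ,
      ∑ j ∈ Finset.Icc 1 N,
          (j : ℝ) ^ ((1 / q) - 1) * φ (t ^ j / (Nat.factorial j : ℝ))
        ≤ (5 * a / α) * φ t := by
  rintro t ⟨ht0, ht1⟩ N
  have ht : t ∈ Set.Icc (0 : ℝ) 1 := ⟨ht0.le, ht1⟩
  have hφ_nonneg : ∀ x ∈ Set.Icc (0 : ℝ) 1, 0 ≤ φ x := fun x hx =>
    h0 ▸ hmono (Set.left_mem_Icc.mpr zero_le_one) hx hx.1
  have hφt : 0 ≤ φ t := hφ_nonneg t ht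
  have hweight : ∀ j ∈ Icc 1 N, (j : ℝ) ^ ((1 / q) - 1) * φ (t ^ j / j.factorial) ≤
      φ (t ^ j / j.factorial) := fun j hj =>
    natCast_rpow_one_div_sub_one_mul_le hq (hφ_nonneg _ (pow_div_factorial_mem_Icc ht j))
      (mem_Icc.mp hj).1
  have hr1 : (1 / 2 : ℝ) ^ α < 1 := rpow_lt_one (by norm_num) (by norm_num) hα0
  calc _ ≤ ⌊1 / α⌋₊ * φ t + a * φ t / (1 - (1 / 2) ^ α) := by
        refine sum_Icc_le_of_le_of_le_geometric hφt (by positivity) (by positivity)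
          hr1 (fun j hj _ => (hweight j hj).trans ?_) (fun j hj hjJ => (hweight j hj).trans ?_)
        · exact hmono (pow_div_factorial_mem_Icc ht j) ht
            (pow_div_factorial_le_self ht0.le ht1 (mem_Icc.mp hj).1)
        · exact apply_pow_div_factorial_le_geometric hbound (by linarith) hα0.le ht
            (hconc.self_le_apply_of_mem_Icc h0 h1 ht)
            ((div_lt_iff₀ hα0).mp (Nat.lt_of_floor_lt hjJ)).le
    _ ≤ 1 / α * φ t + a * φ t / (α / 2) := by
        gcongr
        · exact Nat.floor_le (by positivity)
        · exact div_two_le_one_sub_half_rpow hα0.le hα1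
    _ = (1 + 2 * a) / α * φ t := by field_simp
    _ ≤ 5 * a / α * φ t := by gcongr; linarith
end

section
/- Let φ : [0,1] → [0,1] be an increasing concave function with φ(0) = 0, φ(1) = 1, and suppose sup_{0<t≤1} φ(t)·t^{-1/n} = ∞ for every positive integer n. Then for every q ∈ [1,∞) there exists a quasi-concave function ψ : [0,1] → [0,1] with ψ ≤ φ such that sup_{0<t≤1} (1/ψ(t))·Σ_{j=1}^∞ j^{(1/q)-1}·ψ(t^j/j!) = ∞. -/
/-!
Along scales `u m ↓ 0` put `ψ x = sup_m φ (u m) * min 1 (x / u m)`, the least quasi-concave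
majorant of the points `(u m, φ (u m))`; concavity of `φ` with `φ 0 = 0` gives `ψ ≤ φ`.
Since `q ≥ 1`, the sums `∑_{j ≤ J} j ^ (1/q - 1)` diverge, so we can pick `J m` with this sum
`> m`. The growth hypothesis (used with exponent `1 / (2 J m)`) provides `t ∈ (0, 1]` with
`φ (u (m+1)) > (φ (u m) / u m) * t` for `u (m+1) = t ^ J m / (J m)!`. At this `t` the tents
with `i ≤ m` lie below `φ (u (m+1))` (by concavity their slopes are at most `φ (u m) / u m`)
and the later ones have height `φ (u i) ≤ φ (u (m+1))`, so `ψ t ≤ φ (u (m+1))`; meanwhile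
`t ^ j / j! ≥ u (m+1)` for `j ≤ J m` gives `ψ (t ^ j / j!) ≥ φ (u (m+1))`. Hence the quotient
in the theorem exceeds `m`.
-/

def UnboundedOverRoots (φ : ℝ → ℝ) : Prop :=
  ∀ n : ℕ, 0 < n → ∀ M : ℝ, ∃ t ∈ Set.Ioc (0:ℝ) 1, M < φ t * t ^ (-(1 : ℝ) / (n : ℝ))

theorem exists_seq_of_forall_exists {α : Type*} {P : α → Prop} {R : ℕ → α → α → Prop}
    {a : α} (ha : P a) (h : ∀ n x, P x → ∃ y, P y ∧ R n x y) :
    ∃ u : ℕ → α, u 0 = a ∧ ∀ n, P (u n) ∧ R n (u n) (u (n + 1)) := by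
  choose g hg using h
  let v : ℕ → {x // P x} := fun n =>
    Nat.rec ⟨a, ha⟩ (fun n x => ⟨g n x x.2, (hg n x x.2).1⟩) n
  exact ⟨fun n => (v n).1, rfl, fun n => ⟨(v n).2, (hg n (v n).1 (v n).2).2⟩⟩

theorem tendsto_sum_Icc_rpow_atTop {s : ℝ} (hs : -1 ≤ s) :
    Filter.Tendsto (fun N : ℕ => ∑ j ∈ Finset.Icc 1 N, (j : ℝ) ^ s) Filter.atTop Filter.atTop := by
  have hf : ∀ n : ℕ, 0 ≤ ((n + 1 : ℕ) : ℝ) ^ s := fun n => by positivity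
  have hns : ¬ Summable fun n : ℕ => ((n + 1 : ℕ) : ℝ) ^ s := by
    rw [summable_nat_add_iff (f := fun n : ℕ => (n : ℝ) ^ s) 1, Real.summable_nat_rpow]
    linarith
  refine ((not_summable_iff_tendsto_nat_atTop_of_nonneg hf).1 hns).congr fun N => ?_
  rw [Finset.range_eq_Ico, Finset.sum_Ico_add' (fun j : ℕ => (j : ℝ) ^ s)]
  rfl

theorem pow_div_factorial_le_of_le {t : ℝ} (ht0 : 0 ≤ t) (ht1 : t ≤ 1) {i j : ℕ} (hij : i ≤ j) :
    t ^ j / j.factorial ≤ t ^ i / i.factorial :=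
  div_le_div₀ (pow_nonneg ht0 i) (pow_le_pow_of_le_one ht0 ht1 hij)
    (by exact_mod_cast i.factorial_pos) (by exact_mod_cast Nat.factorial_le hij)

theorem sum_le_inv_mul_sum {ι : Type*} (s : Finset ι) {c f : ι → ℝ} {p A : ℝ} (hp : 0 < p)
    (hpA : p ≤ A) (hc : ∀ j ∈ s, 0 ≤ c j) (hf : ∀ j ∈ s, A ≤ f j) :
    ∑ j ∈ s, c j ≤ (1 / p) * ∑ j ∈ s, c j * f j := by
  rw [one_div, le_inv_mul_iff₀ hp, Finset.mul_sum]
  exact Finset.sum_le_sum fun j hj => by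
    nlinarith [hc j hj, hf j hj, mul_le_mul_of_nonneg_left (hpA.trans (hf j hj)) (hc j hj)]

theorem ConcaveOn.mul_le_apply_mul {s : Set ℝ} {φ : ℝ → ℝ} (hφ : ConcaveOn ℝ s φ)
    (h0s : 0 ∈ s) (h0 : 0 ≤ φ 0) {x c : ℝ} (hx : x ∈ s) (hc0 : 0 ≤ c) (hc1 : c ≤ 1) :
    c * φ x ≤ φ (c * x) := by
  have h := hφ.2 h0s hx (sub_nonneg.2 hc1) hc0 (sub_add_cancel 1 c)
  simp only [smul_eq_mul, mul_zero, zero_add] at h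
  nlinarith

theorem ConcaveOn.apply_div_le_apply_div_of_le {s : Set ℝ} {φ : ℝ → ℝ} (hφ : ConcaveOn ℝ s φ)
    (h0s : 0 ∈ s) (h0 : 0 ≤ φ 0) {x y : ℝ} (hy : y ∈ s) (hx : 0 < x) (hxy : x ≤ y) :
    φ y / y ≤ φ x / x := by
  have hy0 : 0 < y := hx.trans_le hxy
  have h := hφ.mul_le_apply_mul h0s h0 hy (div_nonneg hx.le hy0.le) ((div_le_one hy0).2 hxy)
  rw [div_mul_cancel₀ _ hy0.ne'] at h
  rw [le_div_iff₀ hx]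
  calc φ y / y * x = x / y * φ y := by ring
    _ ≤ φ x := h

noncomputable def quasiConcaveMajorant (a u : ℕ → ℝ) (x : ℝ) : ℝ :=
  ⨆ m, a m * min 1 (x / u m)

namespace quasiConcaveMajorant

variable {a u : ℕ → ℝ}

theorem apply_zero (a u : ℕ → ℝ) : quasiConcaveMajorant a u 0 = 0 := by
  simp [quasiConcaveMajorant]

theorem apply_le (ha : ∀ m, 0 ≤ a m) {x A : ℝ} (h : ∀ m, a m ≤ A ∨ a m * (x / u m) ≤ A) :
    quasiConcaveMajorant a u x ≤ A :=
  ciSup_le fun m => (h m).elim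
    (fun h => (mul_le_of_le_one_right (ha m) (min_le_left _ _)).trans h)
    (fun h => (mul_le_mul_of_nonneg_left (min_le_right _ _) (ha m)).trans h)

section

variable (ha : ∀ m, 0 ≤ a m) (hbdd : BddAbove (Set.range a))
include ha hbdd

theorem bddAbove_range (x : ℝ) : BddAbove (Set.range fun m => a m * min 1 (x / u m)) := by
  obtain ⟨B, hB⟩ := hbdd
  refine ⟨B, ?_⟩
  rintro _ ⟨m, rfl⟩
  exact (mul_le_of_le_one_right (ha m) (min_le_left _ _)).trans (hB ⟨m, rfl⟩)

theorem le_apply {m : ℕ} (hu : 0 < u m) {x : ℝ} (hx : u m ≤ x) :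
    a m ≤ quasiConcaveMajorant a u x := by
  refine le_trans (le_of_eq ?_) (le_ciSup (bddAbove_range ha hbdd x) m)
  rw [min_eq_left ((one_le_div hu).2 hx), mul_one]

variable (hu : ∀ m, 0 < u m)
include hu

theorem nonneg {x : ℝ} (hx : 0 ≤ x) : 0 ≤ quasiConcaveMajorant a u x :=
  (mul_nonneg (ha 0) (le_min zero_le_one (div_nonneg hx (hu 0).le))).trans
    (le_ciSup (bddAbove_range ha hbdd x) 0)

theorem pos (ha0 : 0 < a 0) {x : ℝ} (hx : 0 < x) : 0 < quasiConcaveMajorant a u x :=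
  (mul_pos ha0 (lt_min one_pos (div_pos hx (hu 0)))).trans_le
    (le_ciSup (bddAbove_range ha hbdd x) 0)

theorem monotone : Monotone (quasiConcaveMajorant a u) := fun _ y hxy =>
  ciSup_le fun m => (mul_le_mul_of_nonneg_left
    (min_le_min le_rfl (div_le_div_of_nonneg_right hxy (hu m).le)) (ha m)).trans
    (le_ciSup (bddAbove_range ha hbdd y) m)

theorem monotoneOn_div (ha0 : 0 < a 0) :
    MonotoneOn (fun x => x / quasiConcaveMajorant a u x) (Set.Ioi 0) := by
  intro x hx y hy hxy
  simp only
  rw [div_le_div_iff₀ (pos ha hbdd hu ha0 hx) (pos ha hbdd hu ha0 hy), quasiConcaveMajorant,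
    Real.mul_iSup_of_nonneg (le_of_lt hx)]
  refine ciSup_le fun m => ?_
  have hmin : x * min 1 (y / u m) ≤ y * min 1 (x / u m) := by
    rw [mul_min_of_nonneg _ _ (le_of_lt hx), mul_min_of_nonneg _ _ (le_of_lt hy), mul_one,
      mul_one, mul_div_assoc', mul_div_assoc', mul_comm x y]
    exact min_le_min_right _ hxy
  calc x * (a m * min 1 (y / u m)) = a m * (x * min 1 (y / u m)) := by ring
    _ ≤ a m * (y * min 1 (x / u m)) := mul_le_mul_of_nonneg_left hmin (ha m)
    _ = y * (a m * min 1 (x / u m)) := by ring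
    _ ≤ y * quasiConcaveMajorant a u x :=
      mul_le_mul_of_nonneg_left (le_ciSup (bddAbove_range ha hbdd x) m) (le_of_lt hy)

end

end quasiConcaveMajorant

theorem quasiConcaveMajorant_comp_le {φ : ℝ → ℝ} {u : ℕ → ℝ}
    (hmono : MonotoneOn φ (Set.Icc (0:ℝ) 1)) (hconc : ConcaveOn ℝ (Set.Icc (0:ℝ) 1) φ)
    (h0 : φ 0 = 0) (hu : ∀ m, u m ∈ Set.Ioc (0:ℝ) 1) {x : ℝ} (hx : x ∈ Set.Icc (0:ℝ) 1) :
    quasiConcaveMajorant (fun m => φ (u m)) u x ≤ φ x := by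
  have h0mem : (0:ℝ) ∈ Set.Icc (0:ℝ) 1 := Set.left_mem_Icc.2 zero_le_one
  have hum m : u m ∈ Set.Icc (0:ℝ) 1 := Set.Ioc_subset_Icc_self (hu m)
  refine quasiConcaveMajorant.apply_le (fun m => h0 ▸ hmono h0mem (hum m) (hum m).1) fun m => ?_
  rcases le_total (u m) x with h | h
  · exact Or.inl (hmono (hum m) hx h)
  · refine Or.inr ?_
    have := hconc.mul_le_apply_mul h0mem h0.ge (hum m) (div_nonneg hx.1 (hu m).1.le)
      ((div_le_one (hu m).1).2 h)
    rwa [div_mul_cancel₀ _ (hu m).1.ne', mul_comm] at this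

theorem quasiConcaveMajorant_comp_le_of_slope_lt {φ : ℝ → ℝ} {u : ℕ → ℝ}
    (hmono : MonotoneOn φ (Set.Icc (0:ℝ) 1)) (hconc : ConcaveOn ℝ (Set.Icc (0:ℝ) 1) φ)
    (h0 : φ 0 = 0) (hu : ∀ m, u m ∈ Set.Ioc (0:ℝ) 1) (hanti : Antitone u) {m : ℕ} {t : ℝ}
    (ht : 0 ≤ t) (hslope : φ (u m) / u m * t < φ (u (m + 1))) :
    quasiConcaveMajorant (fun m => φ (u m)) u t ≤ φ (u (m + 1)) := by
  have h0mem : (0:ℝ) ∈ Set.Icc (0:ℝ) 1 := Set.left_mem_Icc.2 zero_le_one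
  have hum i : u i ∈ Set.Icc (0:ℝ) 1 := Set.Ioc_subset_Icc_self (hu i)
  refine quasiConcaveMajorant.apply_le (fun i => h0 ▸ hmono h0mem (hum i) (hum i).1) fun i => ?_
  rcases le_or_gt i m with h | h
  · refine Or.inr (le_of_lt (lt_of_le_of_lt ?_ hslope))
    rw [mul_div_assoc', mul_div_right_comm]
    exact mul_le_mul_of_nonneg_right
      (hconc.apply_div_le_apply_div_of_le h0mem h0.ge (hum i) (hu m).1 (hanti h)) ht
  · exact Or.inl (hmono (hum i) (hum _) (hanti h))

theorem exists_small_mul_rpow_inv_lt {φ : ℝ → ℝ} {B : ℝ}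
    (hB : ∀ t ∈ Set.Ioc (0:ℝ) 1, φ t ≤ B)
    (hsup : UnboundedOverRoots φ)
    {n : ℕ} (hn : 0 < n) (K : ℝ) {ε : ℝ} (hε : 0 < ε) :
    ∃ v ∈ Set.Ioc (0:ℝ) 1, v < ε ∧ K * v ^ (n⁻¹ : ℝ) < φ v := by
  set M := max (max K (B / ε)) 1
  obtain ⟨v, hv, hMv⟩ := hsup (2 * n) (by omega) M
  -- with `a = v ^ (1 / 2n)`: `M * a < φ v ≤ B` makes `a` small, and `v ^ (1 / n) = a * a`
  set a := v ^ ((2 * n : ℕ)⁻¹ : ℝ)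
  have ha0 : 0 < a := Real.rpow_pos_of_pos hv.1 _
  have ha1 : a ≤ 1 := Real.rpow_le_one hv.1.le hv.2 (by positivity)
  have hva : v ≤ a := Real.self_le_rpow_of_le_one hv.1.le hv.2 (inv_le_one_of_one_le₀ (by
    exact_mod_cast (by omega : 1 ≤ 2 * n)))
  have hMa : M * a < φ v := by
    rwa [neg_div, Real.rpow_neg hv.1.le, one_div, ← div_eq_mul_inv, lt_div_iff₀ ha0] at hMv
  have hsq : v ^ (n⁻¹ : ℝ) = a * a := by
    rw [← Real.rpow_add hv.1]
    congr 1
    push_cast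
    field_simp
    ring
  have hM1 : 1 ≤ M := le_max_right _ _
  have hKM : K ≤ M := (le_max_left _ _).trans (le_max_left _ _)
  have hBM : B ≤ ε * M := by
    have := (le_max_right K (B / ε)).trans (le_max_left _ 1)
    rwa [div_le_iff₀ hε, mul_comm] at this
  refine ⟨v, hv, ?_, ?_⟩
  · nlinarith [hB v hv]
  · have hKa : K * a ≤ M := by
      nlinarith [mul_nonneg (sub_nonneg.2 hKM) ha0.le,
        mul_nonneg (by linarith : 0 ≤ M) (sub_nonneg.2 ha1)]
    rw [hsq, ← mul_assoc]
    exact (mul_le_mul_of_nonneg_right hKa ha0.le).trans_lt hMa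

theorem exists_mul_lt_apply_pow_div_factorial {φ : ℝ → ℝ} {B : ℝ}
    (hB : ∀ t ∈ Set.Ioc (0:ℝ) 1, φ t ≤ B)
    (hsup : UnboundedOverRoots φ)
    {J : ℕ} (hJ : 0 < J) (c : ℝ) {w : ℝ} (hw : 0 < w) :
    ∃ t ∈ Set.Ioc (0:ℝ) 1, t ^ J / J.factorial < w ∧ c * t < φ (t ^ J / J.factorial) := by
  have hfac : (0 : ℝ) < J.factorial := by exact_mod_cast J.factorial_pos
  obtain ⟨v, hv, hvε, hKv⟩ := exists_small_mul_rpow_inv_lt hB hsup hJ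
    (c * (J.factorial : ℝ) ^ (J⁻¹ : ℝ)) (lt_min hw (inv_pos.2 hfac))
  have hfv : (J.factorial : ℝ) * v ≤ 1 := by
    have := mul_lt_mul_of_pos_left (hvε.trans_le (min_le_right _ _)) hfac
    rw [mul_inv_cancel₀ hfac.ne'] at this
    exact this.le
  have hfv0 : 0 < (J.factorial : ℝ) * v := mul_pos hfac hv.1
  set t := ((J.factorial : ℝ) * v) ^ (J⁻¹ : ℝ) with ht
  have htJ : t ^ J / J.factorial = v := by
    rw [Real.rpow_inv_natCast_pow hfv0.le hJ.ne', mul_div_cancel_left₀ _ hfac.ne']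
  refine ⟨t, ⟨by positivity, Real.rpow_le_one hfv0.le hfv (by positivity)⟩, ?_, ?_⟩
  · rw [htJ]; exact hvε.trans_le (min_le_left _ _)
  · rwa [htJ, ht, Real.mul_rpow hfac.le hv.1.le, ← mul_assoc]

theorem exists_scale_seq {φ : ℝ → ℝ} {B : ℝ}
    (hB : ∀ t ∈ Set.Ioc (0:ℝ) 1, φ t ≤ B)
    (hsup : UnboundedOverRoots φ)
    {J : ℕ → ℕ} (hJ : ∀ m, 0 < J m) :
    ∃ u : ℕ → ℝ, 0 < φ (u 0) ∧ ∀ m, u m ∈ Set.Ioc (0:ℝ) 1 ∧ u (m + 1) < u m ∧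
      ∃ t ∈ Set.Ioc (0:ℝ) 1, u (m + 1) = t ^ J m / (J m).factorial ∧
        φ (u m) / u m * t < φ (u (m + 1)) := by
  obtain ⟨u₀, hu₀, -, hφu₀⟩ := exists_small_mul_rpow_inv_lt hB hsup one_pos 0 one_pos
  obtain ⟨u, rfl, hu⟩ := exists_seq_of_forall_exists (P := (· ∈ Set.Ioc (0:ℝ) 1))
    (R := fun m x y => y < x ∧ ∃ t ∈ Set.Ioc (0:ℝ) 1,
      y = t ^ J m / (J m).factorial ∧ φ x / x * t < φ y) hu₀ fun m x hx => by
    obtain ⟨t, ht, hlt, hφt⟩ :=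
      exists_mul_lt_apply_pow_div_factorial hB hsup (hJ m) (φ x / x) hx.1
    exact ⟨_, ⟨by have := ht.1; positivity, hlt.le.trans hx.2⟩, hlt, t, ht, rfl, hφt⟩
  exact ⟨u, by simpa using hφu₀, hu⟩

theorem theorem14_iii_of_not_general (φ : ℝ → ℝ)
    (hmono : MonotoneOn φ (Set.Icc (0:ℝ) 1))
    (hconc : ConcaveOn ℝ (Set.Icc (0:ℝ) 1) φ)
    (h0 : φ 0 = 0)
    (hsup : ∀ n : ℕ, 0 < n → ∀ M : ℝ, ∃ t ∈ Set.Ioc (0:ℝ) 1,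
      M < φ t * t ^ (-(1 : ℝ) / (n : ℝ)))
    (q : ℝ) (hq : 1 ≤ q) :
    ∃ ψ : ℝ → ℝ, ψ 0 = 0 ∧
      (∀ t ∈ Set.Icc (0:ℝ) 1, 0 ≤ ψ t ∧ ψ t ≤ φ t) ∧
      MonotoneOn ψ (Set.Ioc (0:ℝ) 1) ∧
      MonotoneOn (fun t => t / ψ t) (Set.Ioc (0:ℝ) 1) ∧
      (∀ M : ℝ, ∃ t ∈ Set.Ioc (0:ℝ) 1, ∃ N : ℕ,
        M < (1 / ψ t) * ∑ j ∈ Finset.Icc 1 N,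
              (j : ℝ) ^ ((1 / q) - 1) * ψ (t ^ j / (Nat.factorial j : ℝ))) := by
  have hB : ∀ t ∈ Set.Ioc (0:ℝ) 1, φ t ≤ φ 1 := fun t ht =>
    hmono (Set.Ioc_subset_Icc_self ht) (Set.right_mem_Icc.2 zero_le_one) ht.2
  have hJ (m : ℕ) : ∃ J : ℕ, 0 < J ∧ (m : ℝ) < ∑ j ∈ Finset.Icc 1 J, (j : ℝ) ^ (1 / q - 1) := by
    have hs : -1 ≤ 1 / q - 1 := by linarith [one_div_nonneg.2 (zero_le_one.trans hq)]
    obtain ⟨J, hJ, hJ0⟩ := (((tendsto_sum_Icc_rpow_atTop hs).eventually_gt_atTop (m : ℝ)).and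
      (Filter.eventually_gt_atTop 0)).exists
    exact ⟨J, hJ0, hJ⟩
  choose J hJ0 hJ using hJ
  obtain ⟨u, ha0, hu⟩ := exists_scale_seq hB hsup hJ0
  have hupos m : 0 < u m := (hu m).1.1
  have ha m : 0 ≤ φ (u m) :=
    h0 ▸ hmono (Set.left_mem_Icc.2 zero_le_one) (Set.Ioc_subset_Icc_self (hu m).1) (hupos m).le
  have hbdd : BddAbove (Set.range fun m => φ (u m)) := ⟨φ 1, by
    rintro _ ⟨m, rfl⟩; exact hB _ (hu m).1⟩
  refine ⟨quasiConcaveMajorant (fun m => φ (u m)) u, quasiConcaveMajorant.apply_zero _ _,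
    fun x hx => ⟨quasiConcaveMajorant.nonneg ha hbdd hupos hx.1,
      quasiConcaveMajorant_comp_le hmono hconc h0 (fun m => (hu m).1) hx⟩,
    (quasiConcaveMajorant.monotone ha hbdd hupos).monotoneOn _,
    (quasiConcaveMajorant.monotoneOn_div ha hbdd hupos ha0).mono Set.Ioc_subset_Ioi_self,
    fun M => ?_⟩
  obtain ⟨m, hm⟩ := exists_nat_gt M
  obtain ⟨-, -, t, ht, hut, hslope⟩ := hu m
  refine ⟨t, ht, J m, ?_⟩
  calc M < m := hm
    _ < ∑ j ∈ Finset.Icc 1 (J m), (j : ℝ) ^ (1 / q - 1) := hJ m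
    _ ≤ _ := sum_le_inv_mul_sum _ (quasiConcaveMajorant.pos ha hbdd hupos ha0 ht.1)
      (quasiConcaveMajorant_comp_le_of_slope_lt hmono hconc h0 (fun m => (hu m).1)
        (antitone_nat_of_succ_le fun m => (hu m).2.1.le) ht.1.le hslope)
      (fun j _ => by positivity) fun j hj => quasiConcaveMajorant.le_apply ha hbdd (hupos _)
        (hut ▸ pow_div_factorial_le_of_le ht.1.le ht.2 (Finset.mem_Icc.1 hj).2)

theorem theorem14_iii_of_not (φ : ℝ → ℝ)
    (hmono : MonotoneOn φ (Set.Icc (0:ℝ) 1))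
    (hconc : ConcaveOn ℝ (Set.Icc (0:ℝ) 1) φ)
    (h0 : φ 0 = 0) (h1 : φ 1 = 1)
    (hrange : ∀ t ∈ Set.Icc (0:ℝ) 1, φ t ∈ Set.Icc (0:ℝ) 1)
    (hsup : ∀ n : ℕ, 0 < n → ∀ M : ℝ, ∃ t ∈ Set.Ioc (0:ℝ) 1,
      M < φ t * t ^ (-(1 : ℝ) / (n : ℝ)))
    (q : ℝ) (hq : 1 ≤ q) :
    ∃ ψ : ℝ → ℝ, ψ 0 = 0 ∧
      (∀ t ∈ Set.Icc (0:ℝ) 1, 0 ≤ ψ t ∧ ψ t ≤ φ t) ∧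
      MonotoneOn ψ (Set.Ioc (0:ℝ) 1) ∧
      MonotoneOn (fun t => t / ψ t) (Set.Ioc (0:ℝ) 1) ∧
      (∀ M : ℝ, ∃ t ∈ Set.Ioc (0:ℝ) 1, ∃ N : ℕ,
        M < (1 / ψ t) * ∑ j ∈ Finset.Icc 1 N,
              (j : ℝ) ^ ((1 / q) - 1) * ψ (t ^ j / (Nat.factorial j : ℝ))) :=
  theorem14_iii_of_not_general φ hmono hconc h0 hsup q hq
end

section
/- For p > 0 define φ_p(t) = (log(1 + 1/t)/log 2)^{-1/p} for t ∈ (0,1], φ_p(0) = 0. If 1 ≤ q < ∞ and 0 < p < q, then sup_{0<t≤1} (1/φ_p(t))·Σ_{j=1}^∞ j^{(1/q)-1}·φ_p(t^j/j!) < ∞. -/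
/-- `φ_p(t) = (log(1 + 1/t)/log 2)^{-1/p}` for `t ∈ (0,1]`, `φ_p(0) = 0`. -/
noncomputable def phi (p t : ℝ) : ℝ :=
  if t = 0 then 0 else (Real.log (1 + 1 / t) / Real.log 2) ^ (-(1 : ℝ) / p)

/-!
For `x = 1/t ≥ 1` one has `(1 + x)^j ≤ (2x)^j ≤ 4 j! x^j ≤ (1 + j! x^j)^2`, hence
`log₂ (1 + j!/t^j) ≥ (j/2) log₂ (1 + 1/t)` and `φ_p(t^j/j!) ≤ 2^{1/p} j^{-1/p} φ_p(t)`.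
The series is then dominated by `2^{1/p} φ_p(t) ∑ j^{1/q - 1 - 1/p}`, which converges since `p < q`.
-/

open Real

lemma two_pow_le_two_mul_factorial (n : ℕ) : 2 ^ n ≤ 2 * n.factorial := by
  cases n with
  | zero => simp
  | succ m =>
    have h : 2 ^ m ≤ (m + 1).factorial := by
      simpa [add_comm] using @Nat.factorial_mul_pow_le_factorial 1 m
    rw [pow_succ]
    omega

lemma one_add_pow_le_sq_one_add_factorial_mul_pow {x : ℝ} (hx : 1 ≤ x) (j : ℕ) :
    (1 + x) ^ j ≤ (1 + j.factorial * x ^ j) ^ 2 := by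
  have hfac : (2 : ℝ) ^ j ≤ 2 * j.factorial := by exact_mod_cast two_pow_le_two_mul_factorial j
  have hxj : 0 ≤ x ^ j := by positivity
  calc (1 + x) ^ j ≤ (2 * x) ^ j := by gcongr; linarith
    _ = 2 ^ j * x ^ j := mul_pow _ _ _
    _ ≤ 4 * 1 * (j.factorial * x ^ j) := by nlinarith
    _ ≤ (1 + j.factorial * x ^ j) ^ 2 := four_mul_le_sq_add _ _

lemma mul_logb_one_add_le_two_mul_logb {x : ℝ} (hx : 1 ≤ x) (j : ℕ) :
    j * logb 2 (1 + x) ≤ 2 * logb 2 (1 + j.factorial * x ^ j) := by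
  have h := logb_le_logb_of_le one_lt_two (by positivity)
    (one_add_pow_le_sq_one_add_factorial_mul_pow hx j)
  rwa [logb_pow, logb_pow, Nat.cast_ofNat] at h

lemma phi_of_pos (p : ℝ) {t : ℝ} (ht : 0 < t) :
    phi p t = logb 2 (1 + t⁻¹) ^ (-1 / p) := by
  rw [phi, if_neg ht.ne', one_div, logb]

lemma phi_nonneg (p : ℝ) {t : ℝ} (ht : 0 < t) : 0 ≤ phi p t := by
  rw [phi_of_pos p ht]
  exact rpow_nonneg (logb_nonneg one_lt_two (by linarith [inv_pos.2 ht])) _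

lemma phi_pow_div_factorial_le {p t : ℝ} (hp : 0 < p) (ht₀ : 0 < t) (ht₁ : t ≤ 1)
    {j : ℕ} (hj : 1 ≤ j) :
    phi p (t ^ j / j.factorial) ≤ 2 ^ (1 / p) * (j : ℝ) ^ (-1 / p) * phi p t := by
  have hx : 1 ≤ t⁻¹ := one_le_inv₀ ht₀ |>.2 ht₁
  have hL : 0 < logb 2 (1 + t⁻¹) := logb_pos one_lt_two (by linarith)
  have hj₀ : (0 : ℝ) < j := by exact_mod_cast hj
  have hinv : (t ^ j / j.factorial)⁻¹ = j.factorial * t⁻¹ ^ j := by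
    rw [inv_div, inv_pow, div_eq_mul_inv]
  have hlower : j / 2 * logb 2 (1 + t⁻¹) ≤ logb 2 (1 + (t ^ j / j.factorial)⁻¹) := by
    rw [hinv]
    linarith [mul_logb_one_add_le_two_mul_logb hx j]
  have hexp : -1 / p ≤ 0 := div_nonpos_of_nonpos_of_nonneg (by norm_num) hp.le
  rw [phi_of_pos p (by positivity), phi_of_pos p ht₀]
  calc logb 2 (1 + (t ^ j / j.factorial)⁻¹) ^ (-1 / p)
      ≤ (j / 2 * logb 2 (1 + t⁻¹)) ^ (-1 / p) :=
        rpow_le_rpow_of_nonpos (by positivity) hlower hexp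
    _ = 2 ^ (1 / p) * (j : ℝ) ^ (-1 / p) * logb 2 (1 + t⁻¹) ^ (-1 / p) := by
        rw [mul_rpow (by positivity) hL.le, div_rpow hj₀.le zero_le_two, neg_div,
          rpow_neg zero_le_two, ← neg_div, div_inv_eq_mul]
        ring

theorem lemma18_first_general (p q : ℝ) (hp : 0 < p) (hpq : p < q) :
    ∃ B : ℝ, ∀ t ∈ Set.Ioc (0:ℝ) 1, ∀ N : ℕ,
      ∑ j ∈ Finset.Icc 1 N,
          (j : ℝ) ^ ((1 / q) - 1) * phi p (t ^ j / (Nat.factorial j : ℝ))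
        ≤ B * phi p t := by
  set a : ℝ := 1 / q - 1 + -1 / p
  have ha : a < -1 := by
    have := one_div_lt_one_div_of_lt hp hpq
    simp only [a, neg_div]
    linarith
  have hsum : Summable (fun j : ℕ => (j : ℝ) ^ a) := summable_nat_rpow.2 ha
  refine ⟨2 ^ (1 / p) * ∑' j : ℕ, (j : ℝ) ^ a, ?_⟩
  rintro t ⟨ht₀, ht₁⟩ N
  calc ∑ j ∈ Finset.Icc 1 N, (j : ℝ) ^ (1 / q - 1) * phi p (t ^ j / j.factorial)
      ≤ ∑ j ∈ Finset.Icc 1 N, 2 ^ (1 / p) * phi p t * (j : ℝ) ^ a := by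
        refine Finset.sum_le_sum fun j hj => ?_
        have hj := (Finset.mem_Icc.1 hj).1
        have hj₀ : (0 : ℝ) < j := by exact_mod_cast hj
        calc (j : ℝ) ^ (1 / q - 1) * phi p (t ^ j / j.factorial)
            ≤ (j : ℝ) ^ (1 / q - 1) * (2 ^ (1 / p) * (j : ℝ) ^ (-1 / p) * phi p t) := by
              gcongr; exact phi_pow_div_factorial_le hp ht₀ ht₁ hj
          _ = 2 ^ (1 / p) * phi p t * (j : ℝ) ^ a := by rw [rpow_add hj₀]; ring
    _ = 2 ^ (1 / p) * phi p t * ∑ j ∈ Finset.Icc 1 N, (j : ℝ) ^ a := (Finset.mul_sum ..).symm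
    _ ≤ 2 ^ (1 / p) * phi p t * ∑' j : ℕ, (j : ℝ) ^ a := by
        gcongr
        · exact mul_nonneg (by positivity) (phi_nonneg p ht₀)
        · exact hsum.sum_le_tsum _ fun j _ => rpow_nonneg j.cast_nonneg _
    _ = (2 ^ (1 / p) * ∑' j : ℕ, (j : ℝ) ^ a) * phi p t := by ring

theorem lemma18_first (p q : ℝ) (hp : 0 < p) (hq : 1 ≤ q) (hpq : p < q) :
    ∃ B : ℝ, ∀ t ∈ Set.Ioc (0:ℝ) 1, ∀ N : ℕ,
      ∑ j ∈ Finset.Icc 1 N,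
          (j : ℝ) ^ ((1 / q) - 1) * phi p (t ^ j / (Nat.factorial j : ℝ))
        ≤ B * phi p t :=
  lemma18_first_general p q hp hpq
end

section
/- Let 1 ≤ q < ∞ and let φ : [0,1] → [0,1] be increasing with φ(0)=0. If there exists C > 0 such that φ(t) ≥ C·(log(1+1/t)/log 2)^{-1/q} for all t ∈ (0,1], then for every t ∈ (0,1], the series Σ_{j=2}^∞ j^{(1/q)-1}·φ(t^j/j!) diverges. -/
/-!
Write `x_j = t ^ j / j!`. Since `log (1 / x_j) ≤ j log (1 / t) + j log j`, the lower bound on `φ`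
gives `φ x_j ≳ (j log j) ^ (-1/q)`, and the weight `j ^ (1/q - 1)` turns this into
`j ^ (1/q - 1) φ x_j ≳ 1 / (j log j)` (using `q ≥ 1` to absorb the power of `log j`).
The series `∑ 1 / (j log j)` diverges by Cauchy condensation.
-/

open Real Filter

theorem Real.not_summable_one_div_natCast_mul_log :
    ¬ Summable fun n : ℕ => 1 / ((n : ℝ) * log n) := by
  have hnonneg : 0 ≤ᶠ[atTop] fun n : ℕ => 1 / ((n : ℝ) * log n) :=
    Eventually.of_forall fun n => by have := Real.log_natCast_nonneg n; positivity
  have hanti : ∀ᶠ k : ℕ in atTop,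
      1 / (((k + 1 : ℕ) : ℝ) * log (k + 1 : ℕ)) ≤ 1 / ((k : ℝ) * log k) := by
    filter_upwards [eventually_ge_atTop 2] with k hk
    have hk' : (2 : ℝ) ≤ k := by exact_mod_cast hk
    apply one_div_le_one_div_of_le (mul_pos (by linarith) (log_pos (by linarith)))
    push_cast
    exact mul_le_mul (by linarith) (log_le_log (by linarith) (by linarith))
      (log_nonneg (by linarith)) (by linarith)
  rw [← summable_condensed_iff_of_eventually_nonneg hnonneg hanti]
  have hcondensed : (fun k : ℕ => (2 : ℝ) ^ k * (1 / (((2 ^ k : ℕ) : ℝ) * log (2 ^ k : ℕ)))) =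
      fun k : ℕ => (log 2)⁻¹ * (1 / (k : ℝ)) := by
    ext k
    rcases Nat.eq_zero_or_pos k with rfl | hk
    · simp
    · have : (0 : ℝ) < k := by exact_mod_cast hk
      have := log_pos one_lt_two
      push_cast
      rw [log_pow]
      field_simp
  rw [hcondensed, summable_mul_left_iff (inv_ne_zero (log_pos one_lt_two).ne')]
  exact Real.not_summable_one_div_natCast

theorem not_summable_of_eventually_div_mul_log_le {a : ℕ → ℝ} {c : ℝ} (hc : 0 < c)
    (h : ∀ᶠ j : ℕ in atTop, c / ((j : ℝ) * log j) ≤ a j) : ¬ Summable a := by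
  intro hs
  have hsc : Summable fun n : ℕ => c * (1 / ((n : ℝ) * log n)) := by
    refine hs.of_norm_bounded_eventually_nat ?_
    filter_upwards [h] with j hj
    have := Real.log_natCast_nonneg j
    rw [Real.norm_of_nonneg (by positivity), mul_one_div]
    exact hj
  exact Real.not_summable_one_div_natCast_mul_log ((summable_mul_left_iff hc.ne').1 hsc)

theorem exists_lt_sum_Icc_of_not_summable {a : ℕ → ℝ} (ha : ∀ n, 0 ≤ a n) (hs : ¬ Summable a)
    (m : ℕ) (M : ℝ) : ∃ N, M < ∑ j ∈ Finset.Icc m N, a j := by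
  have htend := (not_summable_iff_tendsto_nat_atTop_of_nonneg ha).1 hs
  obtain ⟨N, hN, hmN⟩ := ((htend.eventually_gt_atTop (M + ∑ j ∈ Finset.range m, a j)).and
    (eventually_ge_atTop m)).exists
  rw [← Finset.sum_range_add_sum_Ico a hmN] at hN
  refine ⟨N, ?_⟩
  calc M < ∑ j ∈ Finset.Ico m N, a j := by linarith
    _ ≤ ∑ j ∈ Finset.Icc m N, a j :=
      Finset.sum_le_sum_of_subset_of_nonneg Finset.Ico_subset_Icc_self fun j _ _ => ha j

theorem one_div_mul_log_le_rpow_mul_rpow {q x : ℝ} (hq : 1 ≤ q) (hx0 : 0 < x)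
    (hx : 1 ≤ log x) : 1 / (x * log x) ≤ x ^ (1 / q - 1) * (x * log x) ^ (-1 / q) := by
  have hexp : -1 ≤ -1 / q := by
    rw [neg_div, neg_le_neg_iff, div_le_one (by linarith)]
    exact hq
  rw [mul_rpow hx0.le (by linarith), ← mul_assoc, ← rpow_add hx0,
    show 1 / q - 1 + -1 / q = -1 by ring, rpow_neg_one, one_div, mul_inv]
  gcongr
  rw [← rpow_neg_one]
  exact rpow_le_rpow_of_exponent_le hx hexp

theorem log_one_add_one_div_le {x : ℝ} (hx0 : 0 < x) (hx1 : x ≤ 1) :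
    log (1 + 1 / x) ≤ log 2 - log x := by
  rw [← log_div two_ne_zero hx0.ne']
  apply log_le_log (by positivity)
  rw [le_div_iff₀ hx0, add_mul, one_div_mul_cancel hx0.ne']
  linarith

theorem neg_log_pow_div_factorial_le {t : ℝ} (ht : 0 < t) (j : ℕ) :
    -log (t ^ j / j.factorial) ≤ j * -log t + j * log j := by
  have hfactorial : log (j.factorial : ℝ) ≤ j * log j := by
    rw [← log_pow]
    exact log_le_log (by positivity) (by exact_mod_cast Nat.factorial_le_pow j)
  rw [log_div (by positivity) (by positivity), log_pow]
  linarith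

theorem pow_div_factorial_mem_Ioc {t : ℝ} (ht : t ∈ Set.Ioc (0 : ℝ) 1) (j : ℕ) :
    t ^ j / j.factorial ∈ Set.Ioc (0 : ℝ) 1 := by
  refine ⟨by have := ht.1; positivity, ?_⟩
  rw [div_le_one (by positivity)]
  exact (pow_le_one₀ ht.1.le ht.2).trans (by exact_mod_cast j.factorial_pos)

theorem pos_of_one_le_log_natCast {j : ℕ} (hj : 1 ≤ log j) : 0 < j :=
  Nat.pos_of_ne_zero (by rintro rfl; norm_num at hj)

theorem log_one_add_one_div_pow_div_factorial_le {t : ℝ} (ht : t ∈ Set.Ioc (0 : ℝ) 1) {j : ℕ}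
    (hj : 1 ≤ log j) : log (1 + 1 / (t ^ j / j.factorial)) ≤ (2 - log t) * (j * log j) := by
  have hx := pow_div_factorial_mem_Ioc ht j
  have hlog_x := log_one_add_one_div_le hx.1 hx.2
  have hneg_log_x := neg_log_pow_div_factorial_le ht.1 j
  have hlog_t : 0 ≤ -log t := neg_nonneg.2 (log_nonpos ht.1.le ht.2)
  have hlog_two : log 2 ≤ 1 := by linarith [Real.log_two_lt_d9]
  have hj1 : (1 : ℝ) ≤ j := by exact_mod_cast pos_of_one_le_log_natCast hj
  nlinarith [mul_nonneg (mul_nonneg hlog_t (by linarith : (0 : ℝ) ≤ j)) (sub_nonneg.2 hj)]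

def LogLowerBound (q C : ℝ) (φ : ℝ → ℝ) : Prop :=
  ∀ t ∈ Set.Ioc (0 : ℝ) 1, C * (log (1 + 1 / t) / log 2) ^ (-(1 : ℝ) / q) ≤ φ t

namespace LogLowerBound

variable {q C : ℝ} {φ : ℝ → ℝ}

theorem nonneg (h : LogLowerBound q C φ) (hC : 0 < C) {t : ℝ} (ht : t ∈ Set.Ioc (0 : ℝ) 1) :
    0 ≤ φ t := by
  have hlog : 0 ≤ log (1 + 1 / t) := log_nonneg (le_add_of_nonneg_right (one_div_nonneg.2 ht.1.le))
  exact (mul_nonneg hC.le (rpow_nonneg (div_nonneg hlog (log_nonneg one_le_two)) _)).trans (h t ht)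

theorem exists_div_mul_log_le_weighted (h : LogLowerBound q C φ) (hq : 1 ≤ q) (hC : 0 < C)
    {t : ℝ} (ht : t ∈ Set.Ioc (0 : ℝ) 1) :
    ∃ c > 0, ∀ᶠ j : ℕ in atTop,
      c / (j * log j) ≤ (j : ℝ) ^ (1 / q - 1) * φ (t ^ j / j.factorial) := by
  have hlog_two := log_pos one_lt_two
  have hlog_t : 0 ≤ -log t := neg_nonneg.2 (log_nonpos ht.1.le ht.2)
  set K := (2 - log t) / log 2
  have hK : 0 < K := div_pos (by linarith) hlog_two
  have he : -(1 : ℝ) / q ≤ 0 := div_nonpos_of_nonpos_of_nonneg (by norm_num) (by linarith)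
  refine ⟨C * K ^ (-(1 : ℝ) / q), by positivity, ?_⟩
  filter_upwards [(tendsto_log_atTop.comp tendsto_natCast_atTop_atTop).eventually_ge_atTop 1]
    with j hj
  simp only [Function.comp_apply] at hj
  have hj0 : (0 : ℝ) < j := by exact_mod_cast pos_of_one_le_log_natCast hj
  have hx := pow_div_factorial_mem_Ioc ht j
  set L := log (1 + 1 / (t ^ j / j.factorial)) / log 2 with hL_def
  have hL_pos : 0 < L := div_pos (log_pos (lt_add_of_pos_right _ (one_div_pos.2 hx.1))) hlog_two
  have hL : L ≤ K * (j * log j) := by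
    rw [hL_def, div_le_iff₀ hlog_two, mul_comm K, mul_assoc, div_mul_cancel₀ _ hlog_two.ne',
      mul_comm]
    exact log_one_add_one_div_pow_div_factorial_le ht hj
  calc C * K ^ (-(1 : ℝ) / q) / (j * log j)
      = C * K ^ (-(1 : ℝ) / q) * (1 / (j * log j)) := by ring
    _ ≤ C * K ^ (-(1 : ℝ) / q) * ((j : ℝ) ^ (1 / q - 1) * (j * log j) ^ (-(1 : ℝ) / q)) := by
      gcongr
      exact one_div_mul_log_le_rpow_mul_rpow hq hj0 hj
    _ = (j : ℝ) ^ (1 / q - 1) * (C * (K * (j * log j)) ^ (-(1 : ℝ) / q)) := by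
      rw [mul_rpow hK.le (by positivity)]
      ring
    _ ≤ (j : ℝ) ^ (1 / q - 1) * (C * L ^ (-(1 : ℝ) / q)) :=
      mul_le_mul_of_nonneg_left
        (mul_le_mul_of_nonneg_left (rpow_le_rpow_of_nonpos hL_pos hL he) hC.le)
        (rpow_nonneg hj0.le _)
    _ ≤ (j : ℝ) ^ (1 / q - 1) * φ (t ^ j / j.factorial) := by
      gcongr
      exact h _ hx

end LogLowerBound

theorem lemma18_second_general (q : ℝ) (hq1 : 1 ≤ q) (φ : ℝ → ℝ)
    (C : ℝ) (hC : 0 < C)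
    (hlower : ∀ t ∈ Set.Ioc (0:ℝ) 1,
      C * (Real.log (1 + 1 / t) / Real.log 2) ^ (-(1 : ℝ) / q) ≤ φ t) :
    ∀ t ∈ Set.Ioc (0:ℝ) 1, ∀ M : ℝ, ∃ N : ℕ,
      M < ∑ j ∈ Finset.Icc 2 N,
            (j : ℝ) ^ ((1 / q) - 1) * φ (t ^ j / (Nat.factorial j : ℝ)) := by
  have hφ : LogLowerBound q C φ := hlower
  intro t ht M
  obtain ⟨c, hc, hterm⟩ := hφ.exists_div_mul_log_le_weighted hq1 hC ht
  refine exists_lt_sum_Icc_of_not_summable (fun j => ?_)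
    (not_summable_of_eventually_div_mul_log_le hc hterm) 2 M
  exact mul_nonneg (rpow_nonneg j.cast_nonneg _) (hφ.nonneg hC (pow_div_factorial_mem_Ioc ht j))

theorem lemma18_second (q : ℝ) (hq1 : 1 ≤ q) (φ : ℝ → ℝ)
    (hmono : MonotoneOn φ (Set.Icc (0:ℝ) 1)) (h0 : φ 0 = 0)
    (hrange : ∀ t ∈ Set.Icc (0:ℝ) 1, φ t ∈ Set.Icc (0:ℝ) 1)
    (C : ℝ) (hC : 0 < C)
    (hlower : ∀ t ∈ Set.Ioc (0:ℝ) 1,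
      C * (Real.log (1 + 1 / t) / Real.log 2) ^ (-(1 : ℝ) / q) ≤ φ t) :
    ∀ t ∈ Set.Ioc (0:ℝ) 1, ∀ M : ℝ, ∃ N : ℕ,
      M < ∑ j ∈ Finset.Icc 2 N,
            (j : ℝ) ^ ((1 / q) - 1) * φ (t ^ j / (Nat.factorial j : ℝ)) :=
  lemma18_second_general q hq1 φ C hC hlower
end
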